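/- arXiv:2310.09455 — 5 statements merged into one kernel-verified Lean document; each statement's English description precedes it below -/
import Mathlib

section
/- Let p : G → ℝ be a nonzero pseudocharacter. Let C > 0 be any constant such that the defect of p is at most C/2 and there exists a value of p in the interval (0, C/2). Set X = {g ∈ G : |p(g)| < C}. Then X generates G, and the map p : (G, d_X) → ℝ is a quasi-isometry. -/
noncomputable section

open Metric

/-- The Gromov product of `x` and `y` at `w` with respect to a distance function `d`. -/
def gromovProd {α : Type*} (d : α → α → ℝ) (w x y : α) : ℝ :=
  (d w x + d w y - d x y) / 2

/-- Gromov hyperbolicity via the four-point condition, for an arbitrary distance function. -/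
def FourPointHyperbolic {α : Type*} (d : α → α → ℝ) : Prop :=
  ∃ δ : ℝ, 0 ≤ δ ∧ ∀ w x y z : α,
    min (gromovProd d w x z) (gromovProd d w z y) - δ ≤ gromovProd d w x y

/-- A geodesic from `x` to `y`, parametrized by arc length on `[0, dist x y]`. -/
def IsGeodesicSeg {X : Type*} [MetricSpace X] (x y : X) (f : ℝ → X) : Prop :=
  f 0 = x ∧ f (dist x y) = y ∧
    ∀ s ∈ Set.Icc (0 : ℝ) (dist x y), ∀ t ∈ Set.Icc (0 : ℝ) (dist x y),
      dist (f s) (f t) = |s - t|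

/-- A geodesic metric space: any two points are joined by a geodesic. -/
def GeodesicSpace (X : Type*) [MetricSpace X] : Prop :=
  ∀ x y : X, ∃ f : ℝ → X, IsGeodesicSeg x y f

/-- The image (as a set) of a geodesic segment from `x` to `y`. -/
def geodSet {X : Type*} [MetricSpace X] (x y : X) (f : ℝ → X) : Set X :=
  f '' Set.Icc (0 : ℝ) (dist x y)

/-- `p` lies within distance `δ` of the set `S` (i.e. in the closed `δ`-neighborhood). -/
def WithinDistOf {X : Type*} [MetricSpace X] (δ : ℝ) (p : X) (S : Set X) : Prop :=
  ∃ q ∈ S, dist p q ≤ δ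

/-- Rips condition: each side of every geodesic triangle is contained in the union of the
closed `δ`-neighborhoods of the other two sides. -/
def RipsHyperbolic (X : Type*) [MetricSpace X] (δ : ℝ) : Prop :=
  ∀ x y z : X, ∀ fxy fyz fxz : ℝ → X,
    IsGeodesicSeg x y fxy → IsGeodesicSeg y z fyz → IsGeodesicSeg x z fxz →
      (∀ p ∈ geodSet x y fxy, WithinDistOf δ p (geodSet y z fyz ∪ geodSet x z fxz)) ∧
      (∀ p ∈ geodSet y z fyz, WithinDistOf δ p (geodSet x y fxy ∪ geodSet x z fxz)) ∧
      (∀ p ∈ geodSet x z fxz, WithinDistOf δ p (geodSet x y fxy ∪ geodSet y z fyz))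

/-- An (isometric) action of a group `G` on a metric space `X`. -/
structure IsIsomAction (G : Type*) [Group G] (X : Type*) [MetricSpace X]
    (act : G → X → X) : Prop where
  act_one : ∀ x : X, act 1 x = x
  act_mul : ∀ (g h : G) (x : X), act (g * h) x = act g (act h x)
  isometry : ∀ (g : G) (x y : X), dist (act g x) (act g y) = dist x y

/-- A cobounded action: some (hence any) orbit is coarsely dense. -/
def CoboundedAction {G X : Type*} [Group G] [MetricSpace X] (act : G → X → X) : Prop :=
  ∃ (x : X) (R : ℝ), 0 ≤ R ∧ ∀ y : X, ∃ g : G, dist y (act g x) ≤ R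

/-- A quasi-isometric embedding between two "spaces" given by distance functions. -/
def IsQIEmbWith {α β : Type*} (dα : α → α → ℝ) (dβ : β → β → ℝ) (f : α → β) : Prop :=
  ∃ A B : ℝ, 1 ≤ A ∧ 0 ≤ B ∧ ∀ x y : α,
    dα x y / A - B ≤ dβ (f x) (f y) ∧ dβ (f x) (f y) ≤ A * dα x y + B

/-- The image of `f` is coarsely dense. -/
def CoarselyDenseWith {α β : Type*} (dβ : β → β → ℝ) (f : α → β) : Prop :=
  ∃ C : ℝ, 0 ≤ C ∧ ∀ y : β, ∃ x : α, dβ (f x) y ≤ C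

/-- A quasi-isometry between two "spaces" given by distance functions. -/
def IsQuasiIsometryWith {α β : Type*} (dα : α → α → ℝ) (dβ : β → β → ℝ) (f : α → β) : Prop :=
  IsQIEmbWith dα dβ f ∧ CoarselyDenseWith dβ f

/-- The standard distance on `ℤ`. -/
def zdist : ℤ → ℤ → ℝ := fun m n => |(m : ℝ) - (n : ℝ)|

/-- `g` is loxodromic for the action `act`: for some basepoint `x`, the orbit map
`n ↦ g ^ n • x` is a quasi-isometric embedding of `ℤ`. -/
def LoxodromicWith {G α : Type*} [Group G] (d : α → α → ℝ) (act : G → α → α) (g : G) : Prop :=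
  ∃ x : α, IsQIEmbWith zdist d (fun n : ℤ => act (g ^ n) x)

/-- Acylindricity of an action, with respect to a distance function. -/
def AcylindricalWith {G α : Type*} (d : α → α → ℝ) (act : G → α → α) : Prop :=
  ∀ ε : ℝ, 0 < ε → ∃ (R : ℝ) (N : ℕ), 0 ≤ R ∧ ∀ x y : α, R ≤ d x y →
    {g : G | d x (act g x) ≤ ε ∧ d y (act g y) ≤ ε}.Finite ∧
    Nat.card {g : G | d x (act g x) ≤ ε ∧ d y (act g y) ≤ ε} ≤ N

/-- Two subsets are within finite Hausdorff distance of each other. -/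
def FinHausdorffClose {α : Type*} (d : α → α → ℝ) (A B : Set α) : Prop :=
  ∃ C : ℝ, (∀ a ∈ A, ∃ b ∈ B, d a b ≤ C) ∧ (∀ b ∈ B, ∃ a ∈ A, d a b ≤ C)

/-- The positive (`pos = true`) or negative (`pos = false`) orbit ray of `g` at `x`. -/
def orbitRay {G α : Type*} [Group G] (act : G → α → α) (g : G) (x : α) (pos : Bool) : Set α :=
  Set.range fun n : ℕ => act (g ^ (if pos then (n : ℤ) else -(n : ℤ))) x

/-- Independence of two loxodromic elements with respect to the basepoint `x`: no orbit ray of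
`g` is within finite Hausdorff distance of an orbit ray of `h`. -/
def IndepWith {G α : Type*} [Group G] (d : α → α → ℝ) (act : G → α → α) (x : α)
    (g h : G) : Prop :=
  ∀ s t : Bool, ¬ FinHausdorffClose d (orbitRay act g x s) (orbitRay act h x t)

/-- A group is virtually cyclic if it has a cyclic subgroup of finite index. -/
def VirtuallyCyclic (G : Type*) [Group G] : Prop :=
  ∃ H : Subgroup G, IsCyclic ↥H ∧ H.FiniteIndex

/-- `S` is a generating set of `G`. -/
def IsGenSet {G : Type*} [Group G] (S : Set G) : Prop :=
  Subgroup.closure S = ⊤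

/-- The word length of `g` with respect to `S`: the least `n` such that `g` is a product of
`n` elements of `S ∪ S⁻¹`. -/
def wordLength {G : Type*} [Group G] (S : Set G) (g : G) : ℕ :=
  sInf {n : ℕ | ∃ l : List G, l.length = n ∧ (∀ s ∈ l, s ∈ S ∨ s⁻¹ ∈ S) ∧ l.prod = g}

/-- The word metric `d_S(g,h) = ‖g⁻¹h‖_S` on `G`. -/
def wordDist {G : Type*} [Group G] (S : Set G) : G → G → ℝ :=
  fun g h => (wordLength S (g⁻¹ * h) : ℝ)

/-- `S ⪯ T` : `S` is dominated by `T`, i.e. `sup_{t ∈ T} ‖t‖_S < ∞`. -/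
def GenSetDominated {G : Type*} [Group G] (S T : Set G) : Prop :=
  ∃ M : ℕ, ∀ t ∈ T, wordLength S t ≤ M

/-- Equivalence of generating sets: mutual domination. -/
def GenSetEquiv {G : Type*} [Group G] (S T : Set G) : Prop :=
  GenSetDominated S T ∧ GenSetDominated T S

/-- The left multiplication action of a group on itself. -/
def leftTranslation {G : Type*} [Group G] : G → G → G := fun g x => g * x

universe uX uG

/-- A bundled isometric action of `G` on a geodesic, δ-hyperbolic (Rips condition)
metric space. -/
structure GrpActHypSpace (G : Type uG) [Group G] : Type (max uG (uX + 1)) where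
  carrier : Type uX
  [inst : MetricSpace carrier]
  act : G → carrier → carrier
  isIsomAction : IsIsomAction G carrier act
  δ : ℝ
  δ_nonneg : 0 ≤ δ
  geodesic : GeodesicSpace carrier
  rips : RipsHyperbolic carrier δ

attribute [instance] GrpActHypSpace.inst

/-- Property (NL): no isometric action of `G` on a geodesic Gromov-hyperbolic metric space
has a loxodromic element. -/
def PropNL (G : Type uG) [Group G] : Prop :=
  ∀ A : GrpActHypSpace.{uX, uG} G, ∀ g : G,
    ¬ LoxodromicWith (fun a b : A.carrier => dist a b) A.act g

/-!
Pick `s` with `0 < p s < C / 2`. Homogeneity gives `p (s ^ n) = n * p s`, so for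
`n = round (p g / p s)` the element `g * s ^ (-n)` has `|p| ≤ p s / 2 + C / 2 < C`: it lies in `X`,
whence `X` generates and `‖g‖_X ≤ |p g| / p s + 3 / 2`. Conversely every letter of a word over `X`
moves `p` by less than `C` plus the defect, so `|p g| ≤ (3 C / 2) ‖g‖_X`. As `p (x⁻¹ * y)` differs
from `p y - p x` by at most the defect, the two bounds make `p` a quasi-isometric embedding, and the
values `n * p s` are `p s / 2`-dense in `ℝ`.
-/

section WordLength

variable {G : Type*} [Group G] {S : Set G}

theorem wordLength_prod_le_length {l : List G} (hl : ∀ a ∈ l, a ∈ S ∨ a⁻¹ ∈ S) :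
    wordLength S l.prod ≤ l.length := by
  unfold wordLength
  exact Nat.sInf_le ⟨l, rfl, hl, rfl⟩

theorem exists_list_length_eq_wordLength (hS : IsGenSet S) (g : G) :
    ∃ l : List G, l.length = wordLength S g ∧ (∀ a ∈ l, a ∈ S ∨ a⁻¹ ∈ S) ∧ l.prod = g := by
  have hg : g ∈ (Subgroup.closure S).toSubmonoid := by
    rw [hS]; exact Subgroup.mem_top g
  rw [Subgroup.closure_toSubmonoid] at hg
  obtain ⟨l, hl, hprod⟩ := Submonoid.exists_list_of_mem_closure hg
  exact Nat.sInf_mem (s := {n | ∃ l : List G, l.length = n ∧ (∀ a ∈ l, a ∈ S ∨ a⁻¹ ∈ S) ∧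
    l.prod = g}) ⟨_, l, rfl, hl, hprod⟩

theorem wordLength_mul_pow_le {x t : G} (hx : x ∈ S) (ht : t ∈ S ∨ t⁻¹ ∈ S) (k : ℕ) :
    wordLength S (x * t ^ k) ≤ k + 1 := by
  have hl : ∀ a ∈ x :: List.replicate k t, a ∈ S ∨ a⁻¹ ∈ S := by
    simp only [List.mem_cons, List.mem_replicate]
    rintro a (rfl | ⟨-, rfl⟩)
    exacts [Or.inl hx, ht]
  simpa using wordLength_prod_le_length hl

theorem wordLength_mul_zpow_le {x s : G} (hx : x ∈ S) (hs : s ∈ S) (n : ℤ) :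
    wordLength S (x * s ^ n) ≤ n.natAbs + 1 := by
  obtain ⟨k, rfl | rfl⟩ := Int.eq_nat_or_neg n
  · simpa using wordLength_mul_pow_le hx (Or.inl hs) k
  · simpa [zpow_neg, ← inv_pow] using wordLength_mul_pow_le hx (Or.inr (by rwa [inv_inv])) k

end WordLength

theorem abs_round_div_mul_sub_le {a : ℝ} (ha : 0 < a) (y : ℝ) :
    |round (y / a) * a - y| ≤ a / 2 := by
  have h : round (y / a) * a - y = -((y / a - round (y / a)) * a) := by
    field_simp; ring
  rw [h, abs_neg, abs_mul, abs_of_pos ha]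
  nlinarith [abs_sub_round (y / a)]

theorem natAbs_round_le (x : ℝ) : ((round x).natAbs : ℝ) ≤ |x| + 1 / 2 := by
  rw [Nat.cast_natAbs, Int.cast_abs]
  linarith [abs_sub_abs_le_abs_sub (round x : ℝ) x, abs_sub_comm (round x : ℝ) x, abs_sub_round x]

theorem isQIEmbWith_of_le_mul_add {α β : Type*} {dα : α → α → ℝ} {dβ : β → β → ℝ}
    {f : α → β} (hα : ∀ x y, 0 ≤ dα x y) (hβ : ∀ x y, 0 ≤ dβ x y) (K L K' L' : ℝ)
    (hlower : ∀ x y, dα x y ≤ K * dβ (f x) (f y) + L)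
    (hupper : ∀ x y, dβ (f x) (f y) ≤ K' * dα x y + L') :
    IsQIEmbWith dα dβ f := by
  set A := max (max K K') 1
  set B := max (max L L') 0
  have hA : 1 ≤ A := le_max_right _ _
  have hB : 0 ≤ B := le_max_right _ _
  have hKA : K ≤ A := (le_max_left _ _).trans (le_max_left _ _)
  have hK'A : K' ≤ A := (le_max_right _ _).trans (le_max_left _ _)
  have hLB : L ≤ B := (le_max_left _ _).trans (le_max_left _ _)
  have hL'B : L' ≤ B := (le_max_right _ _).trans (le_max_left _ _)
  refine ⟨A, B, hA, hB, fun x y => ⟨?_, ?_⟩⟩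
  · rw [sub_le_iff_le_add, div_le_iff₀ (by linarith)]
    nlinarith [hlower x y, hβ (f x) (f y)]
  · nlinarith [hupper x y, hα x y]

section Pseudocharacter

variable {G : Type*} [Group G] {p : G → ℝ} {D : ℝ}

theorem map_inv_of_map_zpow (hhom : ∀ (g : G) (n : ℤ), p (g ^ n) = n * p g) (g : G) :
    p g⁻¹ = -p g := by
  simpa using hhom g (-1)

theorem abs_map_list_prod_le (hhom : ∀ (g : G) (n : ℤ), p (g ^ n) = n * p g)
    (hdef : ∀ g h : G, |p (g * h) - p g - p h| ≤ D) {M : ℝ} :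
    ∀ {l : List G}, (∀ a ∈ l, |p a| ≤ M) → |p l.prod| ≤ (M + D) * l.length
  | [], _ => by simpa using hhom 1 0
  | a :: l, hl => by
    have ha := hl a List.mem_cons_self
    have ih := abs_map_list_prod_le hhom hdef fun b hb => hl b (List.mem_cons_of_mem a hb)
    have hd := hdef a l.prod
    rw [List.prod_cons, List.length_cons, Nat.cast_succ]
    calc |p (a * l.prod)| = |p a + p l.prod + (p (a * l.prod) - p a - p l.prod)| := by ring_nf
      _ ≤ |p a| + |p l.prod| + |p (a * l.prod) - p a - p l.prod| := abs_add_three _ _ _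
      _ ≤ (M + D) * (l.length + 1) := by linarith

theorem abs_map_le_mul_wordLength (hhom : ∀ (g : G) (n : ℤ), p (g ^ n) = n * p g)
    (hdef : ∀ g h : G, |p (g * h) - p g - p h| ≤ D) {S : Set G} (hS : IsGenSet S) {M : ℝ}
    (hM : ∀ s ∈ S, |p s| ≤ M) (g : G) :
    |p g| ≤ (M + D) * wordLength S g := by
  obtain ⟨l, hlen, hl, rfl⟩ := exists_list_length_eq_wordLength hS g
  rw [← hlen]
  refine abs_map_list_prod_le hhom hdef fun a ha => ?_
  rcases hl a ha with h | h
  · exact hM a h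
  · simpa [map_inv_of_map_zpow hhom] using hM _ h

theorem abs_sub_sub_map_inv_mul_le (hdef : ∀ g h : G, |p (g * h) - p g - p h| ≤ D) (x y : G) :
    |p y - p x - p (x⁻¹ * y)| ≤ D := by
  simpa using hdef x (x⁻¹ * y)

theorem abs_map_mul_zpow_neg_round_le (hhom : ∀ (g : G) (n : ℤ), p (g ^ n) = n * p g)
    (hdef : ∀ g h : G, |p (g * h) - p g - p h| ≤ D) {s : G} (hs : 0 < p s) (g : G) :
    |p (g * s ^ (-round (p g / p s)))| ≤ p s / 2 + D := by
  have hd := hdef g (s ^ (-round (p g / p s)))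
  have hr := abs_round_div_mul_sub_le hs (p g)
  rw [hhom] at hd
  push_cast at hd
  rw [abs_le] at hd hr ⊢
  constructor <;> linarith [hd.1, hd.2, hr.1, hr.2]

theorem coarselyDenseWith_of_map_zpow (hhom : ∀ (g : G) (n : ℤ), p (g ^ n) = n * p g)
    {s : G} (hs : 0 < p s) : CoarselyDenseWith (fun a b : ℝ => dist a b) p :=
  ⟨p s / 2, (half_pos hs).le, fun y =>
    ⟨s ^ round (y / p s), by simpa [Real.dist_eq, hhom] using abs_round_div_mul_sub_le hs y⟩⟩

theorem defect_nonneg (hdef : ∀ g h : G, |p (g * h) - p g - p h| ≤ D) : 0 ≤ D :=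
  (abs_nonneg _).trans (hdef 1 1)

variable {C : ℝ} {s : G}

theorem abs_map_lt_of_add_defect_lt (hdef : ∀ g h : G, |p (g * h) - p g - p h| ≤ D)
    (hs : 0 < p s) (hsC : p s + D < C) : |p s| < C := by
  rw [abs_of_pos hs]; linarith [defect_nonneg hdef]

theorem exists_abs_map_mul_zpow_neg_lt (hhom : ∀ (g : G) (n : ℤ), p (g ^ n) = n * p g)
    (hdef : ∀ g h : G, |p (g * h) - p g - p h| ≤ D) (hs : 0 < p s) (hsC : p s + D < C)
    (g : G) : ∃ n : ℤ, |p (g * s ^ (-n))| < C ∧ (n.natAbs : ℝ) ≤ |p g| / p s + 1 / 2 := by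
  refine ⟨round (p g / p s), ?_, ?_⟩
  · linarith [abs_map_mul_zpow_neg_round_le hhom hdef hs g]
  · simpa [abs_div, abs_of_pos hs] using natAbs_round_le (p g / p s)

theorem isGenSet_setOf_abs_lt (hhom : ∀ (g : G) (n : ℤ), p (g ^ n) = n * p g)
    (hdef : ∀ g h : G, |p (g * h) - p g - p h| ≤ D) (hs : 0 < p s) (hsC : p s + D < C) :
    IsGenSet {g : G | |p g| < C} := by
  have hsX : s ∈ {g : G | |p g| < C} := abs_map_lt_of_add_defect_lt hdef hs hsC
  refine (Subgroup.eq_top_iff' _).mpr fun g => ?_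
  obtain ⟨n, hx, -⟩ := exists_abs_map_mul_zpow_neg_lt hhom hdef hs hsC g
  have hxX : g * s ^ (-n) ∈ {g : G | |p g| < C} := hx
  simpa using mul_mem (Subgroup.subset_closure hxX) (zpow_mem (Subgroup.subset_closure hsX) n)

theorem wordLength_setOf_abs_lt_le (hhom : ∀ (g : G) (n : ℤ), p (g ^ n) = n * p g)
    (hdef : ∀ g h : G, |p (g * h) - p g - p h| ≤ D) (hs : 0 < p s) (hsC : p s + D < C)
    (g : G) : (wordLength {g : G | |p g| < C} g : ℝ) ≤ |p g| / p s + 3 / 2 := by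
  obtain ⟨n, hx, hn⟩ := exists_abs_map_mul_zpow_neg_lt hhom hdef hs hsC g
  have h := wordLength_mul_zpow_le (S := {g : G | |p g| < C}) hx
    (abs_map_lt_of_add_defect_lt hdef hs hsC) n
  rw [zpow_neg, inv_mul_cancel_right] at h
  have h' : (wordLength {g : G | |p g| < C} g : ℝ) ≤ n.natAbs + 1 := by exact_mod_cast h
  linarith

theorem isQuasiIsometryWith_wordDist_setOf_abs_lt
    (hhom : ∀ (g : G) (n : ℤ), p (g ^ n) = n * p g)
    (hdef : ∀ g h : G, |p (g * h) - p g - p h| ≤ D) (hs : 0 < p s) (hsC : p s + D < C) :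
    IsQuasiIsometryWith (wordDist {g : G | |p g| < C}) (fun a b : ℝ => dist a b) p := by
  have hS := isGenSet_setOf_abs_lt hhom hdef hs hsC
  refine ⟨isQIEmbWith_of_le_mul_add (fun _ _ => Nat.cast_nonneg _) (fun _ _ => dist_nonneg)
    (1 / p s) (D / p s + 3 / 2) (C + D) D (fun x y => ?_) (fun x y => ?_),
    coarselyDenseWith_of_map_zpow hhom hs⟩
  all_goals
    have hxy := abs_sub_sub_map_inv_mul_le hdef x y
    simp only [wordDist, Real.dist_eq, abs_sub_comm (p x)]
  · have hp : |p (x⁻¹ * y)| ≤ |p y - p x| + D := by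
      linarith [abs_sub_abs_le_abs_sub (p (x⁻¹ * y)) (p y - p x),
        abs_sub_comm (p (x⁻¹ * y)) (p y - p x)]
    calc (wordLength {g : G | |p g| < C} (x⁻¹ * y) : ℝ) ≤ |p (x⁻¹ * y)| / p s + 3 / 2 :=
          wordLength_setOf_abs_lt_le hhom hdef hs hsC (x⁻¹ * y)
      _ ≤ (|p y - p x| + D) / p s + 3 / 2 := by gcongr
      _ = 1 / p s * |p y - p x| + (D / p s + 3 / 2) := by ring
  · linarith [abs_sub_abs_le_abs_sub (p y - p x) (p (x⁻¹ * y)),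
      abs_map_le_mul_wordLength hhom hdef hS (fun g (hg : |p g| < C) => hg.le) (x⁻¹ * y)]

end Pseudocharacter

theorem stmt_1_general {G : Type*} [Group G] (p : G → ℝ)
    (hhom : ∀ (g : G) (n : ℤ), p (g ^ n) = n * p g)
    (C : ℝ)
    (hdefect : ∀ g h : G, |p (g * h) - p g - p h| ≤ C / 2)
    (hvalue : ∃ g : G, p g ∈ Set.Ioo (0 : ℝ) (C / 2)) :
    IsGenSet {g : G | |p g| < C} ∧
    IsQuasiIsometryWith (wordDist {g : G | |p g| < C}) (fun a b : ℝ => dist a b) p := by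
  obtain ⟨s, hs, hsC⟩ := hvalue
  have hsC' : p s + C / 2 < C := by linarith
  exact ⟨isGenSet_setOf_abs_lt hhom hdefect hs hsC',
    isQuasiIsometryWith_wordDist_setOf_abs_lt hhom hdefect hs hsC'⟩

/-- [ABO, Lemma 4.15]. -/
theorem stmt_1 {G : Type*} [Group G] (p : G → ℝ)
    (hhom : ∀ (g : G) (n : ℤ), p (g ^ n) = n * p g)
    (hnonzero : ∃ g : G, p g ≠ 0)
    (C : ℝ) (hC : 0 < C)
    (hdefect : ∀ g h : G, |p (g * h) - p g - p h| ≤ C / 2)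
    (hvalue : ∃ g : G, p g ∈ Set.Ioo (0 : ℝ) (C / 2)) :
    IsGenSet {g : G | |p g| < C} ∧
    IsQuasiIsometryWith (wordDist {g : G | |p g| < C}) (fun a b : ℝ => dist a b) p :=
  stmt_1_general p hhom C hdefect hvalue
end
end

section
/- If a group G acts coboundedly by isometries on an unbounded geodesic δ-hyperbolic metric space X, then G contains a loxodromic element. -/
noncomputable section

open Metric

universe uX uG

namespace Stmt2Aux

variable {X : Type*} [MetricSpace X]

theorem gp_comm (w x y : X) : gromovProd dist w x y = gromovProd dist w y x := by
  simp only [gromovProd, dist_comm x y]; ring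

theorem gp_nonneg (w x y : X) : 0 ≤ gromovProd dist w x y := by
  have h := dist_triangle x w y
  have h2 := dist_comm w x
  simp only [gromovProd]; linarith

theorem gp_le_right (w x y : X) : gromovProd dist w x y ≤ dist w y := by
  have h := dist_triangle w y x
  have h2 := dist_comm y x
  simp only [gromovProd]; linarith

theorem gp_expand (w a c : X) :
    dist a c = dist w a + dist w c - 2 * gromovProd dist w a c := by
  simp only [gromovProd]; ring

theorem gp_flip (w a c : X) :
    gromovProd dist w a c = dist w a - gromovProd dist a c w := by
  have h1 := dist_comm w a
  have h2 := dist_comm w c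
  simp only [gromovProd]; linarith

theorem geod_dist_left {x y : X} {f : ℝ → X} (h : IsGeodesicSeg x y f) {s : ℝ}
    (hs : s ∈ Set.Icc (0:ℝ) (dist x y)) : dist x (f s) = s := by
  obtain ⟨h0, h1, h2⟩ := h
  have h3 := h2 0 ⟨le_refl 0, dist_nonneg⟩ s hs
  rw [h0] at h3
  rw [h3, abs_of_nonpos (by linarith [hs.1])]; ring

theorem geod_dist_right {x y : X} {f : ℝ → X} (h : IsGeodesicSeg x y f) {s : ℝ}
    (hs : s ∈ Set.Icc (0:ℝ) (dist x y)) : dist (f s) y = dist x y - s := by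
  obtain ⟨h0, h1, h2⟩ := h
  have h3 := h2 s hs (dist x y) ⟨dist_nonneg, le_refl _⟩
  rw [h1] at h3
  rw [h3, abs_of_nonpos (by linarith [hs.2])]; ring

theorem gp_le_geod (w : X) {x y : X} {f : ℝ → X} (h : IsGeodesicSeg x y f) {q : X}
    (hq : q ∈ geodSet x y f) : gromovProd dist w x y ≤ dist w q := by
  obtain ⟨s, hs, rfl⟩ := hq
  have h1 := geod_dist_left h hs
  have h2 := geod_dist_right h hs
  have t1 := dist_triangle w (f s) x
  have t2 := dist_triangle w (f s) y
  have c1 := dist_comm (f s) x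
  simp only [gromovProd]; linarith

theorem four_point {δ : ℝ} (hδ : 0 ≤ δ) (hgeo : GeodesicSpace X) (hrips : RipsHyperbolic X δ)
    (w x y z : X) :
    min (gromovProd dist w x z) (gromovProd dist w z y) - 3*δ ≤ gromovProd dist w x y := by
  obtain ⟨f1, hf1⟩ := hgeo x w
  obtain ⟨f2, hf2⟩ := hgeo w y
  obtain ⟨f3, hf3⟩ := hgeo x y
  obtain ⟨f4, hf4⟩ := hgeo y z
  obtain ⟨f5, hf5⟩ := hgeo x z
  set t := gromovProd dist x w y with ht
  have htdef : t = (dist x w + dist x y - dist w y)/2 := rfl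
  have ht0 : 0 ≤ t := gp_nonneg x w y
  have htd : t ≤ dist x y := gp_le_right x w y
  have htmem : t ∈ Set.Icc (0:ℝ) (dist x y) := ⟨ht0, htd⟩
  have hpmem : f3 t ∈ geodSet x y f3 := ⟨t, htmem, rfl⟩
  have dxp : dist x (f3 t) = t := geod_dist_left hf3 htmem
  have dpy : dist (f3 t) y = dist x y - t := geod_dist_right hf3 htmem
  have hgpw : gromovProd dist w x y = (dist w x + dist w y - dist x y)/2 := rfl
  have cwx := dist_comm w x
  have step1 : dist w (f3 t) ≤ gromovProd dist w x y + 2*δ := by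
    obtain ⟨-, -, h3⟩ := hrips x w y f1 f2 f3 hf1 hf2 hf3
    obtain ⟨q, hq, hpq⟩ := h3 (f3 t) hpmem
    rcases hq with hq | hq
    · obtain ⟨s, hs, rfl⟩ := hq
      have e1 : dist x (f1 s) = s := geod_dist_left hf1 hs
      have e2 : dist (f1 s) w = dist x w - s := geod_dist_right hf1 hs
      have t1 := dist_triangle w (f1 s) (f3 t)
      have t2 := dist_triangle x (f1 s) (f3 t)
      have c1 := dist_comm (f1 s) (f3 t)
      have c2 := dist_comm w (f1 s)
      linarith
    · obtain ⟨s, hs, rfl⟩ := hq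
      have e1 : dist w (f2 s) = s := geod_dist_left hf2 hs
      have e2 : dist (f2 s) y = dist w y - s := geod_dist_right hf2 hs
      have t1 := dist_triangle w (f2 s) (f3 t)
      have t2 := dist_triangle (f3 t) (f2 s) y
      have c1 := dist_comm (f2 s) (f3 t)
      linarith
  obtain ⟨h1', -, -⟩ := hrips x y z f3 f4 f5 hf3 hf4 hf5
  obtain ⟨q, hq, hpq⟩ := h1' (f3 t) hpmem
  have tq := dist_triangle w (f3 t) q
  rcases hq with hq | hq
  · have hle : gromovProd dist w y z ≤ dist w q := gp_le_geod w hf4 hq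
    have hmin : min (gromovProd dist w x z) (gromovProd dist w z y)
        ≤ gromovProd dist w y z := by
      rw [gp_comm w y z]; exact min_le_right _ _
    linarith
  · have hle : gromovProd dist w x z ≤ dist w q := gp_le_geod w hf5 hq
    have hmin := min_le_left (gromovProd dist w x z) (gromovProd dist w z y)
    linarith

variable {G : Type*} [Group G] {act : G → X → X}

theorem dist_orbit (hact : IsIsomAction G X act) (p q : G) (a : X) :
    dist (act p a) (act q a) = dist a (act (p⁻¹ * q) a) := by
  rw [← hact.isometry p⁻¹ (act p a) (act q a), ← hact.act_mul, inv_mul_cancel,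
    hact.act_one, ← hact.act_mul]

theorem dist_act_inv (hact : IsIsomAction G X act) (g : G) (a : X) :
    dist a (act g⁻¹ a) = dist a (act g a) := by
  have h := dist_orbit hact g 1 a
  rw [hact.act_one, mul_one] at h
  rw [← h, dist_comm]

theorem gp_act (hact : IsIsomAction G X act) (g : G) (w a b : X) :
    gromovProd dist (act g w) (act g a) (act g b) = gromovProd dist w a b := by
  simp only [gromovProd, hact.isometry]

theorem lox_criterion (hact : IsIsomAction G X act) {δ₁ : ℝ} (hδ₁ : 0 ≤ δ₁)
    (h4 : ∀ w x y z : X,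
      min (gromovProd dist w x z) (gromovProd dist w z y) - δ₁ ≤ gromovProd dist w x y)
    (g : G) (x : X)
    (hcrit : 2 * gromovProd dist x (act g x) (act g⁻¹ x) + 2*δ₁ < dist x (act g x)) :
    LoxodromicWith (fun a b : X => dist a b) act g := by
  have hK0 : 0 ≤ gromovProd dist x (act g x) (act g⁻¹ x) := gp_nonneg _ _ _
  set L := dist x (act g x) with hL
  set K := gromovProd dist x (act g x) (act g⁻¹ x) with hK
  have hσ0 : 0 < L - 2*K - 2*δ₁ := by linarith
  set σ := L - 2*K - 2*δ₁ with hσdef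
  have hstep : ∀ n : ℕ, dist (act (g^n) x) (act (g^(n+1)) x) = L := by
    intro n
    rw [dist_orbit hact, pow_succ, inv_mul_cancel_left, hL]
  have hKn : ∀ n : ℕ, gromovProd dist (act (g^(n+1)) x) (act (g^n) x)
      (act (g^(n+1+1)) x) = K := by
    intro n
    have e2 : act (g^(n+1)) (act g⁻¹ x) = act (g^n) x := by
      rw [← hact.act_mul, pow_succ, mul_inv_cancel_right]
    have e3 : act (g^(n+1)) (act g x) = act (g^(n+1+1)) x := by
      rw [← hact.act_mul, ← pow_succ]
    rw [← e2, ← e3, gp_act hact, gp_comm, hK]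
  have hA : ∀ n : ℕ, gromovProd dist (act (g^n) x) x (act (g^(n+1)) x) ≤ K + δ₁ := by
    intro n
    induction n with
    | zero =>
      have h0 : gromovProd dist (act (g^0) x) x (act (g^(0+1)) x) = 0 := by
        simp only [pow_zero, hact.act_one, gromovProd, dist_self]
        ring
      rw [h0]; linarith
    | succ n ih =>
      by_contra hcon
      push_neg at hcon
      have hf := gp_flip (act (g^(n+1)) x) (act (g^n) x) x
      have hcm := dist_comm (act (g^(n+1)) x) (act (g^n) x)
      have hbig : K + δ₁ < gromovProd dist (act (g^(n+1)) x) (act (g^n) x) x := by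
        have hs := hstep n
        linarith
      have h4' := h4 (act (g^(n+1)) x) (act (g^n) x) (act (g^(n+1+1)) x) x
      rw [hKn n] at h4'
      have hmin := lt_min hbig hcon
      linarith
  have hlow : ∀ n : ℕ, (n : ℝ) * σ ≤ dist x (act (g^n) x) := by
    intro n
    induction n with
    | zero => simp [pow_zero, hact.act_one]
    | succ n ih =>
      have hexp := gp_expand (act (g^n) x) x (act (g^(n+1)) x)
      have c1 := dist_comm (act (g^n) x) x
      have hP := hA n
      have hs := hstep n
      push_cast
      linarith
  have hup : ∀ n : ℕ, dist x (act (g^n) x) ≤ (n : ℝ) * L := by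
    intro n
    induction n with
    | zero => simp [pow_zero, hact.act_one]
    | succ n ih =>
      have ht := dist_triangle x (act (g^n) x) (act (g^(n+1)) x)
      have hs := hstep n
      push_cast
      linarith
  have hL0 : 0 < L := by linarith
  refine ⟨x, max (max σ⁻¹ L) 1, 0, le_max_right _ _, le_refl 0, ?_⟩
  intro m n
  have hA1 : (1:ℝ) ≤ max (max σ⁻¹ L) 1 := le_max_right _ _
  have hAσ : σ⁻¹ ≤ max (max σ⁻¹ L) 1 := le_trans (le_max_left _ _) (le_max_left _ _)
  have hAL : L ≤ max (max σ⁻¹ L) 1 := le_trans (le_max_right _ _) (le_max_left _ _)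
  have hApos : (0:ℝ) < max (max σ⁻¹ L) 1 := lt_of_lt_of_le one_pos hA1
  have h1A : 1 ≤ σ * max (max σ⁻¹ L) 1 := by
    have h := mul_le_mul_of_nonneg_left hAσ (le_of_lt hσ0)
    rwa [mul_inv_cancel₀ (ne_of_gt hσ0)] at h
  have hAinv : (max (max σ⁻¹ L) 1)⁻¹ ≤ σ := by
    calc (max (max σ⁻¹ L) 1)⁻¹ = (max (max σ⁻¹ L) 1)⁻¹ * 1 := (mul_one _).symm
      _ ≤ (max (max σ⁻¹ L) 1)⁻¹ * (σ * max (max σ⁻¹ L) 1) :=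
          mul_le_mul_of_nonneg_left h1A (inv_nonneg.mpr (le_of_lt hApos))
      _ = σ := by
          rw [mul_comm σ, ← mul_assoc, inv_mul_cancel₀ (ne_of_gt hApos), one_mul]
  set j := (n - m).natAbs with hj
  have hzd : zdist m n = (j : ℝ) := by
    simp only [zdist]
    rw [show (m:ℝ) - (n:ℝ) = ((m - n : ℤ) : ℝ) by push_cast; ring]
    rw [← Int.cast_abs, abs_sub_comm (m:ℤ) n, Int.abs_eq_natAbs, ← hj]
    norm_cast
  have hdist : dist (act (g ^ m) x) (act (g ^ n) x) = dist x (act (g ^ j) x) := by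
    rw [dist_orbit hact]
    have hpow : (g ^ m)⁻¹ * g ^ n = g ^ (n - m) := by
      rw [← zpow_neg, ← zpow_add]; congr 1; ring
    rw [hpow]
    rcases Int.natAbs_eq (n - m) with h | h
    · rw [← hj] at h; rw [h, zpow_natCast]
    · rw [← hj] at h; rw [h, zpow_neg, dist_act_inv hact, zpow_natCast]
  have hj0 : (0:ℝ) ≤ (j:ℝ) := Nat.cast_nonneg j
  clear_value σ L K j
  constructor
  · show zdist m n / max (max σ⁻¹ L) 1 - 0 ≤ dist (act (g ^ m) x) (act (g ^ n) x)
    rw [hzd, hdist, sub_zero, div_eq_mul_inv]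
    have h1 : (j:ℝ) * (max (max σ⁻¹ L) 1)⁻¹ ≤ (j:ℝ) * σ :=
      mul_le_mul_of_nonneg_left hAinv hj0
    have h2 := hlow j
    linarith
  · show dist (act (g ^ m) x) (act (g ^ n) x) ≤ max (max σ⁻¹ L) 1 * zdist m n + 0
    rw [hzd, hdist, add_zero]
    have h1 : (j:ℝ) * L ≤ (j:ℝ) * max (max σ⁻¹ L) 1 :=
      mul_le_mul_of_nonneg_left hAL hj0
    have h2 := hup j
    linarith [mul_comm (j:ℝ) (max (max σ⁻¹ L) 1)]

theorem no_lox_contra (hact : IsIsomAction G X act) {δ₁ R N : ℝ}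
    (hδ₁ : 0 ≤ δ₁) (hR : 0 ≤ R) (hN : 100*(R + δ₁) + 1 ≤ N)
    (h4 : ∀ w x y z : X,
      min (gromovProd dist w x z) (gromovProd dist w z y) - δ₁ ≤ gromovProd dist w x y)
    (hno' : ∀ (g : G) (a : X),
      dist a (act g a) ≤ 2 * gromovProd dist a (act g a) (act g⁻¹ a) + 2*δ₁)
    (b : X) (u v : G)
    (hA1l : N - R ≤ dist b (act u b)) (hA1u : dist b (act u b) ≤ N + R)
    (hA2l : N - R ≤ dist b (act u⁻¹ b)) (hA2u : dist b (act u⁻¹ b) ≤ N + R)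
    (hBl : N - 2*R ≤ dist b (act v b)) (hBu : dist b (act v b) ≤ N + 2*R)
    (hgpAB : gromovProd dist b (act u b) (act v b) ≤ 2*R) : False := by
  have dB2 : dist b (act v⁻¹ b) = dist b (act v b) := dist_act_inv hact v b
  have gpU : (N - R)/2 - δ₁ ≤ gromovProd dist b (act u b) (act u⁻¹ b) := by
    have h := hno' u b; linarith
  have gpV : (N - 2*R)/2 - δ₁ ≤ gromovProd dist b (act v b) (act v⁻¹ b) := by
    have h := hno' v b; linarith
  have gpBA2 : gromovProd dist b (act v b) (act u⁻¹ b) ≤ 2*R + δ₁ := by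
    by_contra hc
    push_neg at hc
    have h4' := h4 b (act v b) (act u b) (act u⁻¹ b)
    rw [gp_comm b (act u⁻¹ b) (act u b), gp_comm b (act v b) (act u b)] at h4'
    have hmin := lt_min hc (show 2*R + δ₁ <
      gromovProd dist b (act u b) (act u⁻¹ b) by linarith)
    linarith
  have gpAB2 : gromovProd dist b (act u b) (act v⁻¹ b) ≤ 2*R + δ₁ := by
    by_contra hc
    push_neg at hc
    have h4' := h4 b (act u b) (act v b) (act v⁻¹ b)
    rw [gp_comm b (act v⁻¹ b) (act v b)] at h4'
    have hmin := lt_min hc (show 2*R + δ₁ <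
      gromovProd dist b (act v b) (act v⁻¹ b) by linarith)
    linarith
  have dWl : 2*N - 7*R - 2*δ₁ ≤ dist b (act (u*v) b) := by
    have e : dist b (act (u*v) b) = dist (act u⁻¹ b) (act v b) := by
      have h := dist_orbit hact u⁻¹ v b
      rw [inv_inv] at h
      exact h.symm
    have hexp := gp_expand b (act u⁻¹ b) (act v b)
    have hcm := gp_comm b (act u⁻¹ b) (act v b)
    rw [e, hexp]
    linarith
  have dW2 : dist b (act (u*v)⁻¹ b) = dist b (act (u*v) b) := dist_act_inv hact (u*v) b
  have gpWA : N - 5*R - δ₁ ≤ gromovProd dist b (act (u*v) b) (act u b) := by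
    have hdWA : dist (act (u*v) b) (act u b) = dist b (act v b) := by
      rw [hact.act_mul, hact.isometry u (act v b) b, dist_comm]
    have hexp := gp_expand b (act (u*v) b) (act u b)
    rw [hdWA] at hexp
    linarith
  have gpW2B2 : N - 5*R - δ₁ ≤ gromovProd dist b (act (u*v)⁻¹ b) (act v⁻¹ b) := by
    have hdWB : dist (act (u*v)⁻¹ b) (act v⁻¹ b) = dist b (act u⁻¹ b) := by
      rw [mul_inv_rev, hact.act_mul, hact.isometry v⁻¹ (act u⁻¹ b) b, dist_comm]
    have hexp := gp_expand b (act (u*v)⁻¹ b) (act v⁻¹ b)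
    rw [hdWB] at hexp
    linarith
  have gpB2W : gromovProd dist b (act v⁻¹ b) (act (u*v) b) ≤ 2*R + 2*δ₁ := by
    by_contra hc
    push_neg at hc
    have h4' := h4 b (act v⁻¹ b) (act u b) (act (u*v) b)
    rw [gp_comm b (act v⁻¹ b) (act u b)] at h4'
    have hmin := lt_min hc (show 2*R + 2*δ₁ <
      gromovProd dist b (act (u*v) b) (act u b) by linarith)
    linarith
  have gpWW : gromovProd dist b (act (u*v) b) (act (u*v)⁻¹ b) ≤ 2*R + 3*δ₁ := by
    by_contra hc
    push_neg at hc
    have h4' := h4 b (act (u*v) b) (act v⁻¹ b) (act (u*v)⁻¹ b)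
    rw [gp_comm b (act (u*v) b) (act v⁻¹ b)] at h4'
    have hmin := lt_min hc (show 2*R + 3*δ₁ <
      gromovProd dist b (act (u*v)⁻¹ b) (act v⁻¹ b) by linarith)
    linarith
  have hfin := hno' (u*v) b
  linarith

end Stmt2Aux
/-- a cobounded action on an unbounded geodesic hyperbolic space has a
loxodromic element. -/
theorem stmt_2 {G : Type*} [Group G] {X : Type*} [MetricSpace X]
    (δ : ℝ) (hδ : 0 ≤ δ) (hgeo : GeodesicSpace X) (hrips : RipsHyperbolic X δ)
    (act : G → X → X) (hact : IsIsomAction G X act) (hcob : CoboundedAction act)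
    (hunb : ¬ Bornology.IsBounded (Set.univ : Set X)) :
    ∃ g : G, LoxodromicWith (fun a b : X => dist a b) act g := by
  classical
  by_contra hno
  push_neg at hno
  have hδ₁ : (0:ℝ) ≤ 3*δ := by linarith
  have h4 : ∀ w x y z : X,
      min (gromovProd dist w x z) (gromovProd dist w z y) - 3*δ ≤ gromovProd dist w x y :=
    fun w x y z => Stmt2Aux.four_point hδ hgeo hrips w x y z
  have hno' : ∀ (g : G) (a : X),
      dist a (act g a) ≤ 2 * gromovProd dist a (act g a) (act g⁻¹ a) + 2*(3*δ) := by
    intro g a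
    by_contra hc
    push_neg at hc
    exact hno g (Stmt2Aux.lox_criterion hact hδ₁ h4 g a hc)
  obtain ⟨b, R, hR, hcob⟩ := hcob
  set N := 100*(R + 3*δ) + 1 with hN
  have hN0 : 0 < N := by rw [hN]; linarith
  have hz : ∃ z : X, 2*N < dist b z := by
    by_contra hzc
    push_neg at hzc
    refine hunb ((Metric.isBounded_iff_subset_closedBall b).mpr ⟨2*N, fun z _ => ?_⟩)
    rw [Metric.mem_closedBall, dist_comm]
    exact hzc z
  obtain ⟨z, hz⟩ := hz
  obtain ⟨f, hf⟩ := hgeo b z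
  have hm1 : N ∈ Set.Icc (0:ℝ) (dist b z) := ⟨le_of_lt hN0, by linarith⟩
  have hm2 : 2*N ∈ Set.Icc (0:ℝ) (dist b z) := ⟨by linarith, le_of_lt hz⟩
  have db1 : dist b (f N) = N := Stmt2Aux.geod_dist_left hf hm1
  have db2 : dist b (f (2*N)) = 2*N := Stmt2Aux.geod_dist_left hf hm2
  have d12 : dist (f N) (f (2*N)) = N := by
    obtain ⟨-, -, h2⟩ := hf
    rw [h2 N hm1 (2*N) hm2, abs_of_nonpos (by linarith)]
    ring
  obtain ⟨k, hk⟩ := hcob (f N)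
  obtain ⟨g', hg'⟩ := hcob (f (2*N))
  have a1l : N - R ≤ dist b (act k b) := by
    have t := dist_triangle b (act k b) (f N)
    have c := dist_comm (act k b) (f N)
    linarith
  have a1u : dist b (act k b) ≤ N + R := by
    have t := dist_triangle b (f N) (act k b)
    linarith
  have a2l : 2*N - R ≤ dist b (act g' b) := by
    have t := dist_triangle b (act g' b) (f (2*N))
    have c := dist_comm (act g' b) (f (2*N))
    linarith
  have a3l : N - 2*R ≤ dist (act k b) (act g' b) := by
    have t1 := dist_triangle (f N) (act k b) (act g' b)
    have t2 := dist_triangle (f N) (act g' b) (f (2*N))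
    have c2 := dist_comm (act g' b) (f (2*N))
    linarith
  have a3u : dist (act k b) (act g' b) ≤ N + 2*R := by
    have t1 := dist_triangle (act k b) (f N) (act g' b)
    have t2 := dist_triangle (f N) (f (2*N)) (act g' b)
    have c1 := dist_comm (act k b) (f N)
    linarith
  -- set up the two elements
  have hA1 : dist b (act k⁻¹ b) = dist b (act k b) := Stmt2Aux.dist_act_inv hact k b
  have hA2 : dist b (act k⁻¹⁻¹ b) = dist b (act k b) := by rw [inv_inv]
  have hB : dist b (act (k⁻¹ * g') b) = dist (act k b) (act g' b) :=
    (Stmt2Aux.dist_orbit hact k g' b).symm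
  have hgpAB : gromovProd dist b (act k⁻¹ b) (act (k⁻¹ * g') b) ≤ 2*R := by
    have h1 : act k⁻¹ (act k b) = b := by
      rw [← hact.act_mul, inv_mul_cancel, hact.act_one]
    have h2 : act k⁻¹ (act g' b) = act (k⁻¹ * g') b := (hact.act_mul k⁻¹ g' b).symm
    have e := Stmt2Aux.gp_act hact k⁻¹ (act k b) b (act g' b)
    rw [h1, h2] at e
    rw [e]
    have hexp : gromovProd dist (act k b) b (act g' b)
        = (dist (act k b) b + dist (act k b) (act g' b) - dist b (act g' b))/2 := rfl
    have c := dist_comm (act k b) b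
    rw [hexp]
    linarith
  exact Stmt2Aux.no_lox_contra hact hδ₁ hR (le_of_eq hN.symm) h4 hno' b k⁻¹ (k⁻¹ * g')
    (by rw [hA1]; exact a1l) (by rw [hA1]; exact a1u)
    (by rw [hA2]; exact a1l) (by rw [hA2]; exact a1u)
    (by rw [hB]; exact a3l) (by rw [hB]; exact a3u)
    hgpAB
end
end

section
/- An abelian group G has property (NL) if and only if G is a torsion group. -/
noncomputable section

open Metric

universe uX uG

/-! A torsion element has a periodic orbit map `ℤ → X`, which is never a quasi-isometric
embedding. Conversely, if `g` has infinite order, then `ℤ ≅ ⟨g⟩`, and since `ℝ` is divisible,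
hence an injective abelian group, the map `gⁿ ↦ n` extends to a homomorphism `ψ : G → ℝ`.
Translation by `ψ` is an action of `G` on the line, which is geodesic and `0`-hyperbolic, and `g`
acts on it as translation by `1`. -/

theorem exists_addMonoidHom_real_eq_one {A : Type*} [AddCommGroup A] {a : A}
    (ha : ¬IsOfFinAddOrder a) : ∃ ψ : A →+ ℝ, ψ a = 1 := by
  obtain ⟨ψ, hψ⟩ := (Module.Baer.of_divisible ℝ).extension_property_addMonoidHom
    (zmultiplesHom A a) (injective_zsmul_iff_not_isOfFinAddOrder.mpr ha) (Int.castAddHom ℝ)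
  exact ⟨ψ, by simpa using DFunLike.congr_fun hψ 1⟩

theorem IsQIEmbWith.of_dist_eq {α β : Type*} {dα : α → α → ℝ} {dβ : β → β → ℝ} {f : α → β}
    (hf : ∀ x y, dβ (f x) (f y) = dα x y) : IsQIEmbWith dα dβ f :=
  ⟨1, 0, le_rfl, le_rfl, fun x y => by simp [hf]⟩

theorem IsQIEmbWith.exists_ne_of_lt_zdist {α : Type*} {d : α → α → ℝ} {f : ℤ → α}
    (hf : IsQIEmbWith zdist d f) (hd : ∀ a, d a a = 0) :
    ∃ R : ℝ, ∀ m n, R < zdist m n → f m ≠ f n := by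
  obtain ⟨A, B, hA, -, hbound⟩ := hf
  refine ⟨A * B, fun m n hR hmn => ?_⟩
  have h := (hbound m n).1
  rw [hmn, hd, sub_nonpos, div_le_iff₀ (by linarith)] at h
  linarith

theorem LoxodromicWith.not_isOfFinOrder {G α : Type*} [Group G] {d : α → α → ℝ}
    {act : G → α → α} (hd : ∀ a, d a a = 0) (hact : ∀ a, act 1 a = a) {g : G}
    (hg : LoxodromicWith d act g) : ¬IsOfFinOrder g := by
  obtain ⟨x, hx⟩ := hg
  obtain ⟨R, hR⟩ := hx.exists_ne_of_lt_zdist hd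
  intro hfin
  set m : ℕ := (⌈R⌉₊ + 1) * orderOf g
  have hm : g ^ (m : ℤ) = 1 := by rw [zpow_natCast, pow_mul', pow_orderOf_eq_one, one_pow]
  refine hR m 0 ?_ (by simp [hm, hact])
  have hRm : (⌈R⌉₊ + 1 : ℝ) ≤ m := by
    exact_mod_cast Nat.le_mul_of_pos_right _ hfin.orderOf_pos
  simp only [zdist, Int.cast_natCast, Int.cast_zero, sub_zero, Nat.abs_cast]
  linarith [Nat.le_ceil R]

section Geodesics

variable {X Y : Type*} [MetricSpace X] [MetricSpace Y]

theorem IsGeodesicSeg.comp_isometry {e : X → Y} (he : Isometry e) {x y : X} {f : ℝ → X}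
    (hf : IsGeodesicSeg x y f) : IsGeodesicSeg (e x) (e y) (e ∘ f) := by
  obtain ⟨h0, h1, hdist⟩ := hf
  rw [IsGeodesicSeg, he.dist_eq]
  exact ⟨congrArg e h0, congrArg e h1, fun s hs t ht => by simp [he.dist_eq, hdist s hs t ht]⟩

theorem geodSet_comp_isometry {e : X → Y} (he : Isometry e) (x y : X) (f : ℝ → X) :
    geodSet (e x) (e y) (e ∘ f) = e '' geodSet x y f := by
  rw [geodSet, geodSet, he.dist_eq, Set.image_comp]

theorem GeodesicSpace.of_isometryEquiv (e : X ≃ᵢ Y) (h : GeodesicSpace Y) : GeodesicSpace X := by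
  intro x y
  obtain ⟨f, hf⟩ := h (e x) (e y)
  exact ⟨e.symm ∘ f, by simpa using hf.comp_isometry e.symm.isometry⟩

theorem geodesicSpace_real : GeodesicSpace ℝ := by
  intro a b
  refine ⟨fun t => if a ≤ b then a + t else a - t, ?_, ?_, fun s _ t _ => ?_⟩
  · simp
  · rw [Real.dist_eq]
    split_ifs with h
    · rw [abs_of_nonpos (by linarith)]; ring
    · rw [abs_of_pos (by linarith)]; ring
  · split_ifs
    · simp [Real.dist_eq]
    · rw [Real.dist_eq, ← abs_neg]; ring_nf

theorem geodSet_eq_uIcc_real {a b : ℝ} {f : ℝ → ℝ} (hf : IsGeodesicSeg a b f) :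
    geodSet a b f = Set.uIcc a b := by
  obtain ⟨h0, h1, hdist⟩ := hf
  have hD : 0 ≤ dist a b := dist_nonneg
  apply Set.Subset.antisymm
  · rintro _ ⟨s, hs, rfl⟩
    have e0 := hdist s hs 0 ⟨le_rfl, hD⟩
    have e1 := hdist s hs _ ⟨hD, le_rfl⟩
    rw [h0, sub_zero, abs_of_nonneg hs.1] at e0
    rw [h1, abs_of_nonpos (by linarith [hs.2]), neg_sub] at e1
    -- `f s` splits `dist a b` additively, so it lies between `a` and `b`
    rw [← segment_eq_uIcc, mem_segment_iff_wbtw, ← dist_add_dist_eq_iff, dist_comm, e0, e1]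
    ring
  · have hcont : ContinuousOn f (Set.Icc 0 (dist a b)) :=
      (LipschitzOnWith.of_dist_le_mul (K := 1) fun s hs t ht => by
        simp [hdist s hs t ht, Real.dist_eq]).continuousOn
    exact (isPreconnected_Icc.image f hcont).ordConnected.uIcc_subset
      ⟨0, ⟨le_rfl, hD⟩, h0⟩ ⟨_, ⟨hD, le_rfl⟩, h1⟩

theorem geodSet_eq_preimage_uIcc_of_isometry_real {e : X → ℝ} (he : Isometry e) {x y : X}
    {f : ℝ → X} (hf : IsGeodesicSeg x y f) : geodSet x y f = e ⁻¹' Set.uIcc (e x) (e y) := by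
  rw [← geodSet_eq_uIcc_real (hf.comp_isometry he), geodSet_comp_isometry he,
    he.injective.preimage_image]

theorem ripsHyperbolic_zero_of_isometry_real {e : X → ℝ} (he : Isometry e) :
    RipsHyperbolic X 0 := by
  intro x y z fxy fyz fxz hxy hyz hxz
  have close : ∀ {p : X} {S : Set X}, p ∈ S → WithinDistOf 0 p S :=
    fun hp => ⟨_, hp, (dist_self _).le⟩
  simp only [geodSet_eq_preimage_uIcc_of_isometry_real he, hxy, hyz, hxz, ← Set.preimage_union]
  refine ⟨fun p hp => close ?_, fun p hp => close ?_, fun p hp => close ?_⟩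
  · rw [Set.mem_preimage, Set.union_comm, Set.uIcc_comm (e y)]
    exact Set.uIcc_subset_uIcc_union_uIcc hp
  · rw [Set.mem_preimage, Set.uIcc_comm (e x) (e y)]
    exact Set.uIcc_subset_uIcc_union_uIcc hp
  · exact Set.uIcc_subset_uIcc_union_uIcc hp

end Geodesics

section TranslationAction

universe u

variable {G : Type*} [Group G] (ψ : Additive G →+ ℝ)

def translationAction (h : G) (x : ULift.{u} ℝ) : ULift.{u} ℝ :=
  ⟨x.down + ψ (Additive.ofMul h)⟩

theorem isIsomAction_translationAction : IsIsomAction G (ULift.{u} ℝ) (translationAction ψ) where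
  act_one x := by simp [translationAction]
  act_mul g h x := by ext; simp only [translationAction, ofMul_mul, map_add]; ring
  isometry g x y := by simp [translationAction, ULift.dist_eq]

def translationActHypSpace : GrpActHypSpace.{u} G where
  carrier := ULift.{u} ℝ
  act := translationAction ψ
  isIsomAction := isIsomAction_translationAction ψ
  δ := 0
  δ_nonneg := le_rfl
  geodesic :=
    geodesicSpace_real.of_isometryEquiv { Equiv.ulift with isometry_toFun := fun _ _ => rfl }
  rips := ripsHyperbolic_zero_of_isometry_real (e := ULift.down) fun _ _ => rfl

theorem loxodromicWith_translationAction {g : G} (hψ : ψ (Additive.ofMul g) = 1) :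
    LoxodromicWith (fun a b : ULift.{u} ℝ => dist a b) (translationAction ψ) g :=
  ⟨⟨0⟩, IsQIEmbWith.of_dist_eq fun m n => by
    simp [translationAction, ULift.dist_eq, Real.dist_eq, zdist, ofMul_zpow, hψ]⟩

end TranslationAction

/-- an abelian group has property (NL) iff it is torsion. -/
theorem stmt_6 {G : Type uG} [CommGroup G] :
    PropNL.{uX, uG} G ↔ ∀ g : G, IsOfFinOrder g := by
  refine ⟨fun hNL g => ?_, fun htor A g hg => ?_⟩
  · by_contra hg
    obtain ⟨ψ, hψ⟩ := exists_addMonoidHom_real_eq_one (isOfFinAddOrder_ofMul_iff.not.mpr hg)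
    exact hNL (translationActHypSpace.{uX} ψ) g (loxodromicWith_translationAction ψ hψ)
  · exact hg.not_isOfFinOrder dist_self A.isIsomAction.act_one (htor g)
end
end

section
/- Let G be a group acting by isometries on a geodesic δ-hyperbolic metric space X, and let x ∈ X. Suppose g, h ∈ G are loxodromic elements such that the sets {g^n·x : n ∈ ℤ} and {h^n·x : n ∈ ℤ} are not within finite Hausdorff distance of each other. Then G contains two elements that generate a free sub-semigroup of rank 2. -/
noncomputable section

open Metric

universe uX uG

/-- Two elements generate a free sub-semigroup of rank 2: distinct nonempty positive words
in them represent distinct elements. -/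
def GenerateFreeSubsemigroup {G : Type*} [Group G] (a b : G) : Prop :=
  ∀ w₁ w₂ : List Bool, w₁ ≠ [] → w₂ ≠ [] →
    (w₁.map fun c => if c then a else b).prod = (w₂.map fun c => if c then a else b).prod →
      w₁ = w₂

section Basic

variable {X : Type*} [MetricSpace X]

lemma gp_nonneg (w u v : X) : 0 ≤ gromovProd dist w u v := by
  have := dist_triangle u w v
  simp only [gromovProd]
  rw [dist_comm u w] at this
  linarith

lemma gp_le_left (w u v : X) : gromovProd dist w u v ≤ dist w u := by
  have := dist_triangle w v u
  simp only [gromovProd]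
  rw [dist_comm v u] at this
  linarith [dist_triangle w u v]

lemma gp_comm (w u v : X) : gromovProd dist w u v = gromovProd dist w v u := by
  simp only [gromovProd]
  rw [dist_comm u v]
  ring

lemma gp_id (w p x : X) :
    gromovProd dist x p w + gromovProd dist w p x = dist x w := by
  simp only [gromovProd]
  rw [dist_comm x w] at *
  rw [dist_comm x p, dist_comm w p]
  ring

lemma geod_dist_left {x y : X} {f : ℝ → X} (hf : IsGeodesicSeg x y f)
    {t : ℝ} (ht : t ∈ Set.Icc (0:ℝ) (dist x y)) : dist x (f t) = t := by
  have h0 : (0:ℝ) ∈ Set.Icc (0:ℝ) (dist x y) := ⟨le_refl _, dist_nonneg⟩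
  have := hf.2.2 0 h0 t ht
  rw [hf.1] at this
  rw [this, abs_of_nonpos (by linarith [ht.1])]
  simp

lemma geod_dist_right {x y : X} {f : ℝ → X} (hf : IsGeodesicSeg x y f)
    {t : ℝ} (ht : t ∈ Set.Icc (0:ℝ) (dist x y)) : dist (f t) y = dist x y - t := by
  have hL : (dist x y) ∈ Set.Icc (0:ℝ) (dist x y) := ⟨dist_nonneg, le_refl _⟩
  have := hf.2.2 t ht (dist x y) hL
  rw [hf.2.1] at this
  rw [this, abs_of_nonpos (by linarith [ht.2])]
  ring

lemma mem_geodSet {x y : X} {f : ℝ → X} {p : X} :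
    p ∈ geodSet x y f ↔ ∃ t ∈ Set.Icc (0:ℝ) (dist x y), f t = p := by
  simp [geodSet, Set.mem_image]

lemma gp_le_geod {x u v : X} {f : ℝ → X} (hf : IsGeodesicSeg u v f)
    {p : X} (hp : p ∈ geodSet u v f) : gromovProd dist x u v ≤ dist x p := by
  rcases mem_geodSet.1 hp with ⟨t, ht, rfl⟩
  have h1 : dist x u ≤ dist x (f t) + t := by
    have := geod_dist_left hf ht
    have h := dist_triangle x (f t) u
    rw [dist_comm (f t) u] at h
    -- dist (f t) u = dist u (f t) = t
    have : dist u (f t) = t := geod_dist_left hf ht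
    calc dist x u ≤ dist x (f t) + dist u (f t) := by
          rw [dist_comm u (f t)]; exact dist_triangle x (f t) u
      _ = dist x (f t) + t := by rw [this]
  have h2 : dist x v ≤ dist x (f t) + (dist u v - t) := by
    have : dist (f t) v = dist u v - t := geod_dist_right hf ht
    calc dist x v ≤ dist x (f t) + dist (f t) v := dist_triangle x (f t) v
      _ = dist x (f t) + (dist u v - t) := by rw [this]
  simp only [gromovProd]
  linarith

end Basic
section FourPoint

variable {X : Type*} [MetricSpace X] {δ : ℝ}

/-- On any geodesic from `y` to `z` there is a point at distance at most
`(y|z)_x + 2δ` from `x`. -/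
lemma exists_near_geod (hgeo : GeodesicSpace X) (hrips : RipsHyperbolic X δ)
    {y z : X} (x : X) {f : ℝ → X} (hf : IsGeodesicSeg y z f) :
    ∃ p ∈ geodSet y z f, dist x p ≤ gromovProd dist x y z + 2*δ := by
  obtain ⟨fxy, hfxy⟩ := hgeo x y
  obtain ⟨fxz, hfxz⟩ := hgeo x z
  have hs0 : 0 ≤ gromovProd dist y x z := gp_nonneg _ _ _
  have hs1 : gromovProd dist y x z ≤ dist y z := by
    rw [gp_comm]; exact gp_le_left _ _ _
  set s := gromovProd dist y x z with hsdef
  have hsmem : s ∈ Set.Icc (0:ℝ) (dist y z) := ⟨hs0, hs1⟩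
  have hpmem : f s ∈ geodSet y z f := ⟨s, hsmem, rfl⟩
  have hyp : dist y (f s) = s := geod_dist_left hf hsmem
  have hzp : dist (f s) z = dist y z - s := geod_dist_right hf hsmem
  obtain ⟨-, h2, -⟩ := hrips x y z fxy f fxz hfxy hf hfxz
  obtain ⟨q, hq, hdq⟩ := h2 (f s) hpmem
  refine ⟨f s, hpmem, ?_⟩
  have hsval : s = (dist y x + dist y z - dist x z)/2 := rfl
  show dist x (f s) ≤ (dist x y + dist x z - dist y z)/2 + 2*δ
  rcases hq with hq | hq
  · rcases mem_geodSet.1 hq with ⟨t, htmem, rfl⟩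
    have h1 : dist x (fxy t) = t := geod_dist_left hfxy htmem
    have h2' : dist (fxy t) y = dist x y - t := geod_dist_right hfxy htmem
    have h3 : dist y (f s) ≤ dist y (fxy t) + dist (fxy t) (f s) := dist_triangle _ _ _
    have h4 : dist x (f s) ≤ dist x (fxy t) + dist (fxy t) (f s) := dist_triangle _ _ _
    have h5 : dist (fxy t) (f s) ≤ δ := by rw [dist_comm]; exact hdq
    have h6 : dist y (fxy t) = dist x y - t := by rw [dist_comm]; exact h2'
    linarith [dist_comm y x, dist_comm x y]
  · rcases mem_geodSet.1 hq with ⟨t, htmem, rfl⟩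
    have h1 : dist x (fxz t) = t := geod_dist_left hfxz htmem
    have h2' : dist (fxz t) z = dist x z - t := geod_dist_right hfxz htmem
    have h3 : dist (f s) z ≤ dist (f s) (fxz t) + dist (fxz t) z := dist_triangle _ _ _
    have h4 : dist x (f s) ≤ dist x (fxz t) + dist (fxz t) (f s) := dist_triangle _ _ _
    have h5 : dist (fxz t) (f s) ≤ δ := by rw [dist_comm]; exact hdq
    have h5' : dist (f s) (fxz t) ≤ δ := hdq
    linarith [dist_comm y x]

/-- The four-point condition with constant `3δ` follows from the Rips condition. -/
lemma four_point (hgeo : GeodesicSpace X) (hrips : RipsHyperbolic X δ)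
    (w x y z : X) :
    min (gromovProd dist w x z) (gromovProd dist w z y) - 3*δ ≤ gromovProd dist w x y := by
  obtain ⟨fxy, hfxy⟩ := hgeo x y
  obtain ⟨fyz, hfyz⟩ := hgeo y z
  obtain ⟨fxz, hfxz⟩ := hgeo x z
  obtain ⟨p, hp, hdp⟩ := exists_near_geod hgeo hrips w hfxy
  obtain ⟨h1, -, -⟩ := hrips x y z fxy fyz fxz hfxy hfyz hfxz
  obtain ⟨q, hq, hdq⟩ := h1 p hp
  have hwq : dist w q ≤ dist w p + δ := by
    calc dist w q ≤ dist w p + dist p q := dist_triangle _ _ _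
      _ ≤ dist w p + δ := by linarith
  rcases hq with hq | hq
  · have := gp_le_geod hfyz hq (x := w)
    have hc : gromovProd dist w z y = gromovProd dist w y z := gp_comm _ _ _
    have hmin := min_le_right (gromovProd dist w x z) (gromovProd dist w z y)
    linarith
  · have := gp_le_geod hfxz hq (x := w)
    have hmin := min_le_left (gromovProd dist w x z) (gromovProd dist w z y)
    linarith

end FourPoint
section Diverge

variable {X : Type*} [MetricSpace X] {δ s : ℝ}

/-- Dyadic subdivision: any point on a geodesic joining the endpoints of a chain with
steps `≤ s` and at most `2^k` steps lies within `δ*k + s` of the chain. -/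
lemma diverge (hs : 0 ≤ s) (hgeo : GeodesicSpace X) (hrips : RipsHyperbolic X δ) :
    ∀ (k n : ℕ) (c : ℕ → X), n ≤ 2^k → (∀ i < n, dist (c i) (c (i+1)) ≤ s) →
    ∀ f : ℝ → X, IsGeodesicSeg (c 0) (c n) f →
    ∀ p ∈ geodSet (c 0) (c n) f, ∃ i ≤ n, dist p (c i) ≤ δ*k + s := by
  intro k
  induction k with
  | zero =>
    intro n c hn hc f hf p hp
    interval_cases n
    · rcases mem_geodSet.1 hp with ⟨t, htmem, rfl⟩
      have h0 : dist (c 0) (c 0) = 0 := dist_self _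
      have := geod_dist_left hf htmem
      refine ⟨0, le_refl _, ?_⟩
      rw [dist_comm]
      simp only [Nat.cast_zero, mul_zero, zero_add]
      calc dist (c 0) (f t) = t := this
        _ ≤ dist (c 0) (c 0) := htmem.2
        _ ≤ s := by rw [h0]; exact hs
    · rcases mem_geodSet.1 hp with ⟨t, htmem, rfl⟩
      refine ⟨0, by norm_num, ?_⟩
      rw [dist_comm]
      simp only [Nat.cast_zero, mul_zero, zero_add]
      calc dist (c 0) (f t) = t := geod_dist_left hf htmem
        _ ≤ dist (c 0) (c 1) := htmem.2
        _ ≤ s := hc 0 (by norm_num)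
  | succ k ih =>
    intro n c hn hc f hf p hp
    set j := n / 2 with hj
    have h2k : (2:ℕ)^(k+1) = 2 * 2^k := by ring
    have hjn : j ≤ n := Nat.div_le_self _ _
    have hj2 : j ≤ 2^k := by omega
    have hnj2 : n - j ≤ 2^k := by omega
    obtain ⟨f₁, hf₁⟩ := hgeo (c 0) (c j)
    obtain ⟨f₂, hf₂⟩ := hgeo (c j) (c n)
    obtain ⟨-, -, h3⟩ := hrips (c 0) (c j) (c n) f₁ f₂ f hf₁ hf₂ hf
    obtain ⟨q, hq, hdq⟩ := h3 p hp
    rcases hq with hq | hq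
    · obtain ⟨i, hi, hqi⟩ := ih j c hj2 (fun i hi => hc i (lt_of_lt_of_le hi hjn)) f₁ hf₁ q hq
      refine ⟨i, le_trans hi hjn, ?_⟩
      have : dist p (c i) ≤ dist p q + dist q (c i) := dist_triangle _ _ _
      push_cast
      linarith
    · set c' : ℕ → X := fun l => c (j + l) with hc'
      have e0 : c' 0 = c j := by simp [hc']
      have e1 : c' (n - j) = c n := by simp [hc', Nat.add_sub_cancel' hjn]
      have hsteps : ∀ i < n - j, dist (c' i) (c' (i+1)) ≤ s := by
        intro i hi
        have : j + i < n := by omega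
        have := hc (j + i) this
        simpa [hc', Nat.add_assoc] using this
      have hf₂' : IsGeodesicSeg (c' 0) (c' (n - j)) f₂ := by rw [e0, e1]; exact hf₂
      have hq' : q ∈ geodSet (c' 0) (c' (n - j)) f₂ := by rw [e0, e1]; exact hq
      obtain ⟨i, hi, hqi⟩ := ih (n - j) c' hnj2 hsteps f₂ hf₂' q hq'
      refine ⟨j + i, by omega, ?_⟩
      have : dist p (c (j + i)) ≤ dist p q + dist q (c (j + i)) := dist_triangle _ _ _
      have hqi' : dist q (c (j + i)) ≤ δ*k + s := hqi
      push_cast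
      linarith

end Diverge
section Chains

variable {X : Type*} [MetricSpace X] {s : ℝ}

/-- Subdivide a geodesic into a chain with steps at most `s`. -/
lemma subdiv_chain (hs : 0 < s) {a b : X} {g : ℝ → X} (hg : IsGeodesicSeg a b g) :
    ∃ (N : ℕ) (w : ℕ → X), w 0 = a ∧ w N = b ∧ (∀ l < N, dist (w l) (w (l+1)) ≤ s) ∧
      (∀ l, dist a (w l) ≤ dist a b ∧ dist (w l) b ≤ dist a b) ∧
      (N:ℝ) ≤ dist a b / s + 1 := by
  set D := dist a b with hD
  have hD0 : 0 ≤ D := dist_nonneg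
  set N := ⌈D / s⌉₊ with hN
  refine ⟨N, fun l => g (min (l * s) D), ?_, ?_, ?_, ?_, ?_⟩
  · show g (min ((0:ℕ) * s) D) = a
    simp only [Nat.cast_zero, zero_mul]
    rw [min_eq_left hD0, hg.1]
  · have hDN : D ≤ (N:ℝ) * s := by
      have h1 : D / s ≤ (N:ℝ) := Nat.le_ceil _
      calc D = (D / s) * s := by field_simp
        _ ≤ (N:ℝ) * s := by gcongr
    show g (min ((N:ℝ) * s) D) = b
    rw [min_eq_right hDN, hg.2.1]
  · intro l hl
    have m1 : min ((l:ℝ) * s) D ∈ Set.Icc (0:ℝ) D :=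
      ⟨le_min (by positivity) hD0, min_le_right _ _⟩
    have m2 : min (((l:ℝ)+1) * s) D ∈ Set.Icc (0:ℝ) D :=
      ⟨le_min (by positivity) hD0, min_le_right _ _⟩
    have e1 : ((l+1 : ℕ):ℝ) = (l:ℝ)+1 := by push_cast; ring
    simp only [e1]
    rw [hg.2.2 _ m1 _ m2]
    have hmono : min ((l:ℝ) * s) D ≤ min (((l:ℝ)+1) * s) D :=
      min_le_min (by nlinarith) le_rfl
    have hup : min (((l:ℝ)+1) * s) D ≤ min ((l:ℝ) * s) D + s := by
      rcases le_total (((l:ℝ)+1) * s) D with h | h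
      · rw [min_eq_left h, min_eq_left (by nlinarith)]
        ring_nf
        nlinarith
      · rw [min_eq_right h]
        rcases le_total ((l:ℝ) * s) D with h' | h'
        · rw [min_eq_left h']; nlinarith
        · rw [min_eq_right h']; linarith
    rw [abs_le]
    constructor <;> linarith
  · intro l
    have m1 : min ((l:ℝ) * s) D ∈ Set.Icc (0:ℝ) D :=
      ⟨le_min (by positivity) hD0, min_le_right _ _⟩
    constructor
    · show dist a (g (min ((l:ℝ) * s) D)) ≤ D
      rw [geod_dist_left hg m1]
      exact m1.2
    · show dist (g (min ((l:ℝ) * s) D)) b ≤ D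
      rw [geod_dist_right hg m1]
      linarith [m1.1]
  · have := Nat.ceil_lt_add_one (by positivity : (0:ℝ) ≤ D / s)
    linarith

end Chains
section Append

variable {X : Type*} [MetricSpace X] {s : ℝ}

/-- Concatenation of two chains. -/
lemma chain_append {w₁ w₂ : ℕ → X} {N₁ N₂ : ℕ} (hend : w₁ N₁ = w₂ 0)
    (h₁ : ∀ l < N₁, dist (w₁ l) (w₁ (l+1)) ≤ s)
    (h₂ : ∀ l < N₂, dist (w₂ l) (w₂ (l+1)) ≤ s) :
    ∃ q : ℕ → X, q 0 = w₁ 0 ∧ q (N₁+N₂) = w₂ N₂ ∧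
      (∀ l < N₁+N₂, dist (q l) (q (l+1)) ≤ s) ∧
      (∀ l ≤ N₁+N₂, (∃ l' ≤ N₁, q l = w₁ l') ∨ (∃ l' ≤ N₂, q l = w₂ l')) := by
  refine ⟨fun l => if l < N₁ then w₁ l else w₂ (l - N₁), ?_, ?_, ?_, ?_⟩
  · rcases Nat.eq_zero_or_pos N₁ with h | h
    · subst h
      simpa using hend.symm
    · simp [h]
  · have h : ¬ (N₁ + N₂ < N₁) := by omega
    simp [h]
  · intro l hl
    by_cases hc1 : l + 1 < N₁
    · have hc0 : l < N₁ := by omega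
      simp only [if_pos hc1, if_pos hc0]
      exact h₁ l hc0
    · by_cases hc0 : l < N₁
      · have hl1 : l + 1 = N₁ := by omega
        simp only [if_pos hc0, if_neg hc1]
        have e : l + 1 - N₁ = 0 := by omega
        rw [e, ← hend, ← hl1]
        exact h₁ l hc0
      · simp only [if_neg hc0, if_neg hc1]
        have e : l + 1 - N₁ = (l - N₁) + 1 := by omega
        rw [e]
        exact h₂ (l - N₁) (by omega)
  · intro l hl
    by_cases hc : l < N₁
    · exact Or.inl ⟨l, by omega, by simp [hc]⟩
    · exact Or.inr ⟨l - N₁, by omega, by simp [hc]⟩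

/-- Subchain of an orbit chain between two indices (either orientation). -/
lemma orbit_seg {c : ℕ → X} {n : ℕ} (hc : ∀ i < n, dist (c i) (c (i+1)) ≤ s)
    (iu iv : ℕ) (hiu : iu ≤ n) (hiv : iv ≤ n) :
    ∃ (M : ℕ) (w : ℕ → X), w 0 = c iu ∧ w M = c iv ∧
      (∀ l < M, dist (w l) (w (l+1)) ≤ s) ∧
      (∀ l, ∃ i ≤ n, w l = c i) ∧ (M:ℝ) ≤ |(iu:ℝ) - (iv:ℝ)| := by
  rcases le_total iu iv with h | h
  · refine ⟨iv - iu, fun l => c (min (iu + l) iv), ?_, ?_, ?_, ?_, ?_⟩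
    · have e0 : min (iu + 0) iv = iu := by omega
      simp only [e0]
    · have e0 : min (iu + (iv - iu)) iv = iv := by omega
      simp only [e0]
    · intro l hl
      have e1 : min (iu + l) iv = iu + l := by omega
      have e2 : min (iu + l + 1) iv = iu + l + 1 := by omega
      simp only [← Nat.add_assoc, e1, e2]
      exact hc (iu + l) (by omega)
    · intro l
      exact ⟨min (iu + l) iv, by omega, rfl⟩
    · have hle : (iu:ℝ) ≤ (iv:ℝ) := by exact_mod_cast h
      rw [abs_of_nonpos (by linarith), Nat.cast_sub h]
      linarith
  · refine ⟨iu - iv, fun l => c (iu - min l (iu - iv)), ?_, ?_, ?_, ?_, ?_⟩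
    · have e0 : iu - min 0 (iu - iv) = iu := by omega
      simp only [e0]
    · have e0 : iu - min (iu - iv) (iu - iv) = iv := by omega
      simp only [e0]
    · intro l hl
      have e1 : iu - min l (iu - iv) = iu - l := by omega
      have e2 : iu - min (l+1) (iu - iv) = iu - l - 1 := by omega
      simp only [e1, e2]
      rw [dist_comm]
      have e3 : iu - l - 1 + 1 = iu - l := by omega
      have := hc (iu - l - 1) (by omega)
      rw [e3] at this
      exact this
    · intro l
      exact ⟨iu - min l (iu - iv), by omega, rfl⟩
    · have hle : (iv:ℝ) ≤ (iu:ℝ) := by exact_mod_cast h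
      rw [abs_of_nonneg (by linarith), Nat.cast_sub h]

end Append
section Numeric

lemma sq_le_pow2 (k : ℕ) : ((k:ℝ))^2 ≤ 9 * 2^k := by
  have hlog : (0.6931471803 : ℝ) < Real.log 2 := Real.log_two_gt_d9
  have h2k : (2:ℝ)^k = Real.exp ((k:ℝ) * Real.log 2) := by
    rw [Real.exp_nat_mul, Real.exp_log]; norm_num
  have hhalf : (k:ℝ) * Real.log 2 / 2 + 1 ≤ Real.exp ((k:ℝ) * Real.log 2 / 2) :=
    Real.add_one_le_exp _
  have hk0 : (0:ℝ) ≤ (k:ℝ) := Nat.cast_nonneg _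
  have hpos : (0:ℝ) ≤ (k:ℝ) * Real.log 2 / 2 := by positivity
  have hsq : ((k:ℝ) * Real.log 2 / 2)^2 ≤ Real.exp ((k:ℝ) * Real.log 2) := by
    have e : Real.exp ((k:ℝ) * Real.log 2) = (Real.exp ((k:ℝ) * Real.log 2 / 2))^2 := by
      rw [← Real.exp_nat_mul ((k:ℝ) * Real.log 2 / 2) 2]
      congr 1
      push_cast
      ring
    rw [e]
    have h1 : (k:ℝ) * Real.log 2 / 2 ≤ Real.exp ((k:ℝ) * Real.log 2 / 2) := by linarith
    exact pow_le_pow_left₀ hpos h1 2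
  have hc2 : (0.6931471803 : ℝ) * 0.6931471803 ≤ Real.log 2 * Real.log 2 :=
    mul_le_mul hlog.le hlog.le (by norm_num) (by linarith)
  have hk2 : ((k:ℝ))^2 * ((0.6931471803 : ℝ) * 0.6931471803) ≤
      ((k:ℝ))^2 * (Real.log 2 * Real.log 2) :=
    mul_le_mul_of_nonneg_left hc2 (sq_nonneg _)
  rw [h2k]
  nlinarith [hsq, sq_nonneg ((k:ℝ))]

lemma rho_endgame (δ s α β ρ : ℝ) (Nt k : ℕ) (hδ : 0 ≤ δ) (hs : 1 ≤ s)
    (hα : 0 ≤ α) (hβ : 0 ≤ β)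
    (h1 : ρ - 1 ≤ δ * k + s) (h2 : ((k:ℝ))^2 ≤ 18 * Nt) (h3 : (Nt:ℝ) ≤ α*ρ + β) :
    ρ ≤ (1+s) + 18*δ^2*(α*(2+s) + β) + 1 := by
  by_contra hcon
  push_neg at hcon
  set t := ρ - 1 - s with ht
  have hnn1 : (0:ℝ) ≤ 18*δ^2*α*(2+s) := by positivity
  have hnn2 : (0:ℝ) ≤ 18*δ^2*β := by positivity
  have htD : 18*δ^2*α*(2+s) + 18*δ^2*β + 1 ≤ t := by
    simp only [ht]; nlinarith
  have ht1 : (1:ℝ) ≤ t := by linarith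
  rcases eq_or_lt_of_le hδ with hδ0 | hδ0
  · have hδe : δ = 0 := hδ0.symm
    subst hδe
    norm_num at h1 hcon
    linarith
  · have hkd : t ≤ δ * (k:ℝ) := by linarith
    have hkn : (0:ℝ) ≤ (k:ℝ) := Nat.cast_nonneg _
    have hk2 : t^2 ≤ δ^2 * ((k:ℝ))^2 := by nlinarith
    have hNt : δ^2 * ((k:ℝ))^2 ≤ 18 * δ^2 * ((Nt:ℝ)) := by nlinarith [sq_nonneg δ]
    have hfin : t^2 ≤ 18*δ^2*α*ρ + 18*δ^2*β := by nlinarith [sq_nonneg δ]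
    have hρt : ρ = t + 1 + s := by simp only [ht]; ring
    nlinarith [mul_le_mul_of_nonneg_right htD (by linarith : (0:ℝ) ≤ t),
      mul_nonneg (by positivity : (0:ℝ) ≤ 18*δ^2*α*(1+s)) (by linarith : (0:ℝ) ≤ t - 1),
      mul_nonneg hnn2 (by linarith : (0:ℝ) ≤ t - 1)]

end Numeric
section MorseB

variable {X : Type*} [MetricSpace X] {δ : ℝ}

set_option maxHeartbeats 2000000 in
lemma morse_b (s A C : ℝ) (hδ : 0 ≤ δ) (hs : 1 ≤ s) (hA : 1 ≤ A) (hC : 0 ≤ C)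
    (hgeo : GeodesicSpace X) (hrips : RipsHyperbolic X δ) :
    ∃ D₀ : ℝ, 0 ≤ D₀ ∧ ∀ (n : ℕ) (c : ℕ → X) (f : ℝ → X),
      (∀ i < n, dist (c i) (c (i+1)) ≤ s) →
      (∀ i, i ≤ n → ∀ j, j ≤ n → |(i:ℝ) - (j:ℝ)| ≤ A * dist (c i) (c j) + C) →
      IsGeodesicSeg (c 0) (c n) f →
      ∀ t ∈ Set.Icc (0:ℝ) (dist (c 0) (c n)), ∃ i ≤ n, dist (f t) (c i) ≤ D₀ := by
  have hspos : (0:ℝ) < s := lt_of_lt_of_le zero_lt_one hs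
  set α : ℝ := 6*A + 2 with hαdef
  set β : ℝ := C + 2 with hβdef
  have hα0 : (0:ℝ) ≤ α := by rw [hαdef]; linarith
  have hβ0 : (0:ℝ) ≤ β := by rw [hβdef]; linarith
  have hD₁0 : (0:ℝ) ≤ (1+s) + 18*δ^2*(α*(2+s) + β) + 1 := by
    have h1 : (0:ℝ) ≤ 18*δ^2 := by positivity
    have h2 : (0:ℝ) ≤ α*(2+s) + β := by nlinarith
    nlinarith
  refine ⟨(1+s) + 18*δ^2*(α*(2+s) + β) + 1, hD₁0, ?_⟩
  intro n c f hc hlow hf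
  set L := dist (c 0) (c n) with hLdef
  have hL0 : 0 ≤ L := dist_nonneg
  set CS : Set X := c '' Set.Iic n with hCSdef
  have hCSne : CS.Nonempty := ⟨c 0, ⟨0, Set.mem_Iic.2 (Nat.zero_le n), rfl⟩⟩
  have hCSfin : CS.Finite := (Set.finite_Iic n).image c
  have hnear : ∀ y : X, ∃ i ≤ n, dist y (c i) = Metric.infDist y CS := by
    intro y
    obtain ⟨z, hz, hdz⟩ := hCSfin.isCompact.exists_infDist_eq_dist hCSne y
    obtain ⟨i, hi, rfl⟩ := hz
    exact ⟨i, Set.mem_Iic.1 hi, hdz.symm⟩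
  have hmemCS : ∀ i, i ≤ n → c i ∈ CS := fun i hi => ⟨i, Set.mem_Iic.2 hi, rfl⟩
  set S : Set ℝ := (fun t => Metric.infDist (f t) CS) '' Set.Icc 0 L with hSdef
  have hub : ∀ y ∈ S, y ≤ L := by
    rintro y ⟨t, htI, rfl⟩
    calc Metric.infDist (f t) CS ≤ dist (f t) (c 0) :=
          Metric.infDist_le_dist_of_mem (hmemCS 0 (Nat.zero_le n))
      _ = t := by rw [dist_comm]; exact geod_dist_left hf htI
      _ ≤ L := htI.2
  have hBdd : BddAbove S := ⟨L, hub⟩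
  have hSne : S.Nonempty := ⟨_, ⟨0, ⟨le_refl _, hL0⟩, rfl⟩⟩
  set ρ := sSup S with hρdef
  have hle : ∀ t ∈ Set.Icc (0:ℝ) L, Metric.infDist (f t) CS ≤ ρ :=
    fun t ht => le_csSup hBdd ⟨t, ht, rfl⟩
  have hρ0 : 0 ≤ ρ :=
    le_trans Metric.infDist_nonneg (hle 0 ⟨le_refl _, hL0⟩)
  have hkey : ρ ≤ (1+s) + 18*δ^2*(α*(2+s) + β) + 1 := by
    obtain ⟨y, ⟨t₀, ht₀I, rfl⟩, hy⟩ := exists_lt_of_lt_csSup hSne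
      (show ρ - 1 < ρ by linarith)
    set m := f t₀ with hmdef
    have hm : ∀ i, i ≤ n → ρ - 1 ≤ dist m (c i) := fun i hi =>
      le_trans (le_of_lt hy) (Metric.infDist_le_dist_of_mem (hmemCS i hi))
    have ht₀0 : 0 ≤ t₀ := ht₀I.1
    have ht₀L : t₀ ≤ L := ht₀I.2
    -- u side
    set tu := max 0 (t₀ - 2*ρ) with htudef
    have htu0 : 0 ≤ tu := le_max_left _ _
    have htut₀ : tu ≤ t₀ := max_le ht₀0 (by linarith)
    have htuI : tu ∈ Set.Icc (0:ℝ) L := ⟨htu0, le_trans htut₀ ht₀L⟩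
    set u := f tu with hudef
    obtain ⟨iu, hiu, hdiu⟩ := hnear u
    have hdiuρ : dist u (c iu) ≤ ρ := by rw [hdiu]; exact hle tu htuI
    have hdiu0 : 0 ≤ dist u (c iu) := dist_nonneg
    have hmu : dist m u = t₀ - tu := by
      have := hf.2.2 t₀ ht₀I tu htuI
      rw [this, abs_of_nonneg (by linarith)]
    have Hu : ρ - 1 + dist u (c iu) ≤ dist m u := by
      rcases le_or_gt 0 (t₀ - 2*ρ) with h | h
      · have he : tu = t₀ - 2*ρ := max_eq_right h
        rw [hmu, he]; linarith
      · have he : tu = 0 := max_eq_left (by linarith)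
        have huc0 : u = c 0 := by rw [hudef, he, hf.1]
        have hz : dist u (c iu) = 0 := by
          rw [hdiu, huc0, Metric.infDist_zero_of_mem (hmemCS 0 (Nat.zero_le n))]
        have hmc0 : ρ - 1 ≤ dist m u := by rw [huc0]; exact hm 0 (Nat.zero_le n)
        linarith
    -- v side
    set tv := min L (t₀ + 2*ρ) with htvdef
    have htvt₀ : t₀ ≤ tv := le_min ht₀L (by linarith)
    have htvL : tv ≤ L := min_le_left _ _
    have htvI : tv ∈ Set.Icc (0:ℝ) L := ⟨le_trans ht₀0 htvt₀, htvL⟩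
    set v := f tv with hvdef
    obtain ⟨iv, hiv, hdiv'⟩ := hnear v
    have hdivρ : dist v (c iv) ≤ ρ := by rw [hdiv']; exact hle tv htvI
    have hmv : dist m v = tv - t₀ := by
      have := hf.2.2 t₀ ht₀I tv htvI
      rw [this, abs_of_nonpos (by linarith)]
      ring
    have Hv : ρ - 1 + dist v (c iv) ≤ dist m v := by
      rcases le_or_gt (t₀ + 2*ρ) L with h | h
      · have he : tv = t₀ + 2*ρ := min_eq_right h
        rw [hmv, he]; linarith
      · have he : tv = L := min_eq_left (by linarith)
        have hvcn : v = c n := by rw [hvdef, he, hLdef, hf.2.1]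
        have hz : dist v (c iv) = 0 := by
          rw [hdiv', hvcn, Metric.infDist_zero_of_mem (hmemCS n (le_refl n))]
        have hmcn : ρ - 1 ≤ dist m v := by rw [hvcn]; exact hm n (le_refl n)
        linarith
    -- chains
    obtain ⟨gu, hgu⟩ := hgeo u (c iu)
    obtain ⟨Nu, wu, hwu0, hwuN, hwus, hwud, hwuc⟩ := subdiv_chain hspos hgu
    obtain ⟨M, wm, hwm0, hwmM, hwms, hwmpts, hwmc⟩ := orbit_seg hc iu iv hiu hiv
    obtain ⟨gv, hgv⟩ := hgeo (c iv) v
    obtain ⟨Nv, wv, hwv0, hwvN, hwvs, hwvd, hwvc⟩ := subdiv_chain hspos hgv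
    obtain ⟨q1, hq10, hq1N, hq1s, hq1m⟩ := chain_append (hwuN.trans hwm0.symm) hwus hwms
    obtain ⟨q2, hq20, hq2N, hq2s, hq2m⟩ := chain_append ((hq1N.trans hwmM).trans hwv0.symm) hq1s hwvs
    set Ntot := Nu + M + Nv with hNtotdef
    have hq20u : q2 0 = u := by rw [hq20, hq10, hwu0]
    have hq2Nv : q2 Ntot = v := by rw [hNtotdef, hq2N, hwvN]
    -- geodesic through m from u to v
    have hduv : dist u v = tv - tu := by
      have := hf.2.2 tu htuI tv htvI
      rw [hudef, hvdef, this, abs_of_nonpos (by linarith)]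
      ring
    have hduv4 : dist u v ≤ 4*ρ := by
      rw [hduv]
      have h1 : tv ≤ t₀ + 2*ρ := min_le_right _ _
      have h2 : t₀ - 2*ρ ≤ tu := le_max_right _ _
      linarith
    set f' : ℝ → X := fun r => f (tu + r) with hf'def
    have hf' : IsGeodesicSeg u v f' := by
      refine ⟨?_, ?_, ?_⟩
      · show f (tu + 0) = u; rw [add_zero]
      · show f (tu + dist u v) = v
        rw [hduv]
        have e : tu + (tv - tu) = tv := by ring
        rw [e]
      · intro r hr r' hr'
        rw [hduv] at hr hr'
        have h1 : tu + r ∈ Set.Icc (0:ℝ) L :=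
          ⟨by linarith [hr.1], by linarith [hr.2, htvL]⟩
        have h2 : tu + r' ∈ Set.Icc (0:ℝ) L :=
          ⟨by linarith [hr'.1], by linarith [hr'.2, htvL]⟩
        have := hf.2.2 (tu + r) h1 (tu + r') h2
        show dist (f (tu + r)) (f (tu + r')) = |r - r'|
        rw [this]
        congr 1
        ring
    have hmmem : m ∈ geodSet u v f' := by
      refine ⟨t₀ - tu, ⟨by linarith, by rw [hduv]; linarith⟩, ?_⟩
      show f (tu + (t₀ - tu)) = m
      have e : tu + (t₀ - tu) = t₀ := by ring
      rw [e]
    have hf'' : IsGeodesicSeg (q2 0) (q2 Ntot) f' := by rw [hq20u, hq2Nv]; exact hf'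
    have hmmem' : m ∈ geodSet (q2 0) (q2 Ntot) f' := by rw [hq20u, hq2Nv]; exact hmmem
    set k := Nat.clog 2 Ntot with hkdef
    have hq2s' : ∀ i < Ntot, dist (q2 i) (q2 (i+1)) ≤ s := by
      intro i hi; exact hq2s i (by rw [hNtotdef] at hi; omega)
    obtain ⟨l, hl, hml⟩ := diverge (le_of_lt hspos) hgeo hrips k Ntot q2
      (Nat.le_pow_clog one_lt_two Ntot) hq2s' f' hf'' m hmmem'
    -- lower bound for all chain points
    have hq2lb : ∀ l', l' ≤ Ntot → ρ - 1 ≤ dist m (q2 l') := by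
      intro l' hl'
      rcases hq2m l' (by rw [hNtotdef] at hl' ⊢; omega) with ⟨l₁, hl₁, hq⟩ | ⟨l₁, hl₁, hq⟩
      · rcases hq1m l₁ hl₁ with ⟨l₂, hl₂, hq'⟩ | ⟨l₂, hl₂, hq'⟩
        · rw [hq, hq']
          have h1 : dist u (wu l₂) ≤ dist u (c iu) := (hwud l₂).1
          have h2 : dist m u ≤ dist m (wu l₂) + dist (wu l₂) u := dist_triangle _ _ _
          rw [dist_comm (wu l₂) u] at h2
          linarith
        · obtain ⟨i, hi, he⟩ := hwmpts l₂
          rw [hq, hq', he]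
          exact hm i hi
      · rw [hq]
        have h1 : dist (wv l₁) v ≤ dist (c iv) v := (hwvd l₁).2
        have h2 : dist m v ≤ dist m (wv l₁) + dist (wv l₁) v := dist_triangle _ _ _
        rw [dist_comm (c iv) v] at h1
        linarith
    have h1 : ρ - 1 ≤ δ*k + s := le_trans (hq2lb l hl) hml
    -- counting
    have hNu : (Nu:ℝ) ≤ ρ + 1 := by
      have := hwuc
      have h2 : dist u (c iu) / s ≤ dist u (c iu) := div_le_self hdiu0 hs
      linarith
    have hNv : (Nv:ℝ) ≤ ρ + 1 := by
      have h2 : dist (c iv) v / s ≤ dist (c iv) v := div_le_self dist_nonneg hs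
      have h3 : dist (c iv) v ≤ ρ := by rw [dist_comm]; exact hdivρ
      linarith [hwvc]
    have hM : (M:ℝ) ≤ 6*A*ρ + C := by
      have hd : dist (c iu) (c iv) ≤ 6*ρ := by
        have h2 : dist (c iu) (c iv) ≤ dist (c iu) u + dist u v + dist v (c iv) :=
          dist_triangle4 _ _ _ _
        rw [dist_comm (c iu) u] at h2
        linarith
      have h3 := hlow iu hiu iv hiv
      have h4 : A * dist (c iu) (c iv) ≤ A * (6*ρ) :=
        mul_le_mul_of_nonneg_left hd (by linarith)
      calc (M:ℝ) ≤ |(iu:ℝ) - (iv:ℝ)| := hwmc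
        _ ≤ A * dist (c iu) (c iv) + C := h3
        _ ≤ 6*A*ρ + C := by linarith
    have hcount : (Ntot:ℝ) ≤ α*ρ + β := by
      rw [hNtotdef, hαdef, hβdef]
      push_cast
      nlinarith
    have hk18 : ((k:ℝ))^2 ≤ 18 * (Ntot:ℝ) := by
      rcases lt_or_ge Ntot 2 with h | h
      · have hk0 : k = 0 := by
          rw [hkdef]
          exact Nat.clog_of_right_le_one (by omega) 2
        rw [hk0]
        simp
      · have hk1 : 1 ≤ k := Nat.clog_pos one_lt_two h
        have hp : 2^(k-1) < Ntot := Nat.pow_pred_clog_lt_self one_lt_two (by omega)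
        have h2k : (2:ℕ)^k ≤ 2*Ntot := by
          have he : k - 1 + 1 = k := Nat.sub_add_cancel hk1
          have : (2:ℕ)^k = 2^(k-1) * 2 := by rw [← pow_succ, he]
          omega
        have h2k' : ((2:ℝ))^k ≤ 2*(Ntot:ℝ) := by exact_mod_cast h2k
        calc ((k:ℝ))^2 ≤ 9*2^k := sq_le_pow2 k
          _ ≤ 18*(Ntot:ℝ) := by linarith
    exact rho_endgame δ s α β ρ Ntot k hδ hs hα0 hβ0 h1 hk18 hcount
  intro t ht
  obtain ⟨i, hi, hdi⟩ := hnear (f t)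
  exact ⟨i, hi, by rw [hdi]; exact le_trans (hle t ht) hkey⟩

end MorseB
section MorseA

variable {X : Type*} [MetricSpace X] {δ : ℝ}

lemma chain_dist {s : ℝ} {c : ℕ → X} {n : ℕ} (hc : ∀ i < n, dist (c i) (c (i+1)) ≤ s)
    (hs : 0 ≤ s) : ∀ i j, i ≤ j → j ≤ n → dist (c i) (c j) ≤ s*((j:ℝ) - (i:ℝ)) := by
  intro i j hij hjn
  induction j with
  | zero =>
    have : i = 0 := by omega
    subst this
    simp
  | succ j ih =>
    rcases Nat.lt_or_ge i (j+1) with h | h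
    · have hij' : i ≤ j := by omega
      have h1 := ih hij' (by omega)
      have h2 := hc j (by omega)
      have h3 : dist (c i) (c (j+1)) ≤ dist (c i) (c j) + dist (c j) (c (j+1)) :=
        dist_triangle _ _ _
      push_cast
      have hcast : (i:ℝ) ≤ (j:ℝ) := by exact_mod_cast hij'
      nlinarith
    · have : i = j+1 := by omega
      subst this
      simp

/-- Morse lemma, part (a): chain points lie near any geodesic joining the endpoints. -/
lemma morse_a (s A C : ℝ) (hδ : 0 ≤ δ) (hs : 1 ≤ s) (hA : 1 ≤ A) (hC : 0 ≤ C)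
    (hgeo : GeodesicSpace X) (hrips : RipsHyperbolic X δ) :
    ∃ D₁ : ℝ, 0 ≤ D₁ ∧ ∀ (n : ℕ) (c : ℕ → X) (f : ℝ → X),
      (∀ i < n, dist (c i) (c (i+1)) ≤ s) →
      (∀ i, i ≤ n → ∀ j, j ≤ n → |(i:ℝ) - (j:ℝ)| ≤ A * dist (c i) (c j) + C) →
      IsGeodesicSeg (c 0) (c n) f →
      ∀ k, k ≤ n → ∃ p ∈ geodSet (c 0) (c n) f, dist (c k) p ≤ D₁ := by
  obtain ⟨D₀, hD₀0, hD₀⟩ := morse_b s A C hδ hs hA hC hgeo hrips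
  refine ⟨D₀ + s*(A*(2*D₀)+C), by positivity, ?_⟩
  intro n c f hc hlow hf k hk
  set L := dist (c 0) (c n) with hLdef
  have hL0 : 0 ≤ L := dist_nonneg
  have hb := hD₀ n c f hc hlow hf
  set S₁ : Set ℝ := {t | t ∈ Set.Icc (0:ℝ) L ∧ ∃ i ≤ k, dist (f t) (c i) ≤ D₀} with hS₁def
  have h0S : (0:ℝ) ∈ S₁ := by
    refine ⟨⟨le_refl _, hL0⟩, 0, Nat.zero_le _, ?_⟩
    rw [hf.1]
    simpa using hD₀0
  have hS₁ne : S₁.Nonempty := ⟨0, h0S⟩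
  have hS₁bdd : BddAbove S₁ := ⟨L, fun t ht => ht.1.2⟩
  set t₁ := sSup S₁ with ht₁def
  have ht₁0 : 0 ≤ t₁ := le_csSup hS₁bdd h0S
  have ht₁L : t₁ ≤ L := csSup_le hS₁ne (fun t ht => ht.1.2)
  have ht₁I : t₁ ∈ Set.Icc (0:ℝ) L := ⟨ht₁0, ht₁L⟩
  -- claim A : some chain point with index ≤ k is close to f t₁
  have claimA : ∃ i ≤ k, dist (f t₁) (c i) ≤ D₀ := by
    by_contra hcon
    push_neg at hcon
    obtain ⟨i₀, hi₀mem, hi₀min⟩ := Finset.exists_min_image (Finset.range (k+1))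
      (fun i => dist (f t₁) (c i)) ⟨0, Finset.mem_range.2 (by omega)⟩
    have hi₀k : i₀ ≤ k := by have := Finset.mem_range.1 hi₀mem; omega
    set ε := dist (f t₁) (c i₀) - D₀ with hεdef
    have hε0 : 0 < ε := by have := hcon i₀ hi₀k; simp only [hεdef]; linarith
    obtain ⟨t, htS, htgt⟩ := exists_lt_of_lt_csSup hS₁ne (show t₁ - ε < t₁ by linarith)
    obtain ⟨htI, i, hik, hdi⟩ := htS
    have htle : t ≤ t₁ := le_csSup hS₁bdd ⟨htI, i, hik, hdi⟩
    have hdt : dist (f t₁) (f t) = t₁ - t := by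
      rw [hf.2.2 t₁ ht₁I t htI, abs_of_nonneg (by linarith)]
    have h1 : dist (f t₁) (c i) ≤ dist (f t₁) (f t) + dist (f t) (c i) :=
      dist_triangle _ _ _
    have h2 : dist (f t₁) (c i₀) ≤ dist (f t₁) (c i) :=
      hi₀min i (Finset.mem_range.2 (by omega))
    rw [hdt] at h1
    simp only [hεdef] at *
    linarith
  -- claim B : some chain point with index in [k, n] is close to f t₁
  have claimB : ∃ j, k ≤ j ∧ j ≤ n ∧ dist (f t₁) (c j) ≤ D₀ := by
    rcases eq_or_lt_of_le ht₁L with hLeq | hLlt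
    · refine ⟨n, hk, le_refl _, ?_⟩
      rw [hLeq, hf.2.1]
      simpa using hD₀0
    · by_contra hcon
      push_neg at hcon
      obtain ⟨j₀, hj₀mem, hj₀min⟩ := Finset.exists_min_image
        (Finset.Icc k n) (fun j => dist (f t₁) (c j)) ⟨k, Finset.mem_Icc.2 ⟨le_refl _, hk⟩⟩
      obtain ⟨hj₀k, hj₀n⟩ := Finset.mem_Icc.1 hj₀mem
      set ε := dist (f t₁) (c j₀) - D₀ with hεdef
      have hε0 : 0 < ε := by have := hcon j₀ hj₀k hj₀n; simp only [hεdef]; linarith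
      set t := min L (t₁ + (min ε (L - t₁))/2) with htdef
      have hmin0 : 0 < min ε (L - t₁) := lt_min hε0 (by linarith)
      have htgt : t₁ < t := by
        apply lt_min hLlt
        linarith
      have htI : t ∈ Set.Icc (0:ℝ) L := ⟨by linarith, min_le_left _ _⟩
      have htclose : t - t₁ < ε := by
        have h1 : t ≤ t₁ + (min ε (L - t₁))/2 := min_le_right _ _
        have h2 : min ε (L - t₁) ≤ ε := min_le_left _ _
        linarith
      obtain ⟨i, hin, hdi⟩ := hb t htI
      have hnotS : t ∉ S₁ := fun hmem => absurd (le_csSup hS₁bdd hmem) (by linarith)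
      have hik : ¬ i ≤ k := by
        intro hik
        exact hnotS ⟨htI, i, hik, hdi⟩
      push_neg at hik
      have hdt : dist (f t₁) (f t) = t - t₁ := by
        rw [hf.2.2 t₁ ht₁I t htI, abs_of_nonpos (by linarith)]
        ring
      have h1 : dist (f t₁) (c i) ≤ dist (f t₁) (f t) + dist (f t) (c i) :=
        dist_triangle _ _ _
      have h2 : dist (f t₁) (c j₀) ≤ dist (f t₁) (c i) :=
        hj₀min i (Finset.mem_Icc.2 ⟨le_of_lt hik, hin⟩)
      rw [hdt] at h1
      simp only [hεdef] at *
      linarith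
  obtain ⟨i, hik, hdi⟩ := claimA
  obtain ⟨j, hkj, hjn, hdj⟩ := claimB
  refine ⟨f t₁, ⟨t₁, ht₁I, rfl⟩, ?_⟩
  have hdij : dist (c i) (c j) ≤ 2*D₀ := by
    have := dist_triangle (c i) (f t₁) (c j)
    rw [dist_comm (c i) (f t₁)] at this
    linarith
  have hij : |(i:ℝ) - (j:ℝ)| ≤ A*(2*D₀) + C := by
    have h1 := hlow i (le_trans hik hk) j hjn
    have h2 : A * dist (c i) (c j) ≤ A * (2*D₀) :=
      mul_le_mul_of_nonneg_left hdij (by linarith)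
    linarith
  have hki : (k:ℝ) - (i:ℝ) ≤ A*(2*D₀) + C := by
    have h1 : (k:ℝ) ≤ (j:ℝ) := by exact_mod_cast hkj
    have h2 : (i:ℝ) ≤ (j:ℝ) := by exact_mod_cast le_trans hik hkj
    have h3 : (j:ℝ) - (i:ℝ) ≤ A*(2*D₀) + C := le_trans (le_abs_self _) (by rwa [abs_sub_comm] at hij)
    linarith
  have hdki : dist (c i) (c k) ≤ s*((k:ℝ) - (i:ℝ)) :=
    chain_dist hc (by linarith) i k hik (le_trans hk (le_refl n))
  have h4 : dist (c k) (f t₁) ≤ dist (c k) (c i) + dist (c i) (f t₁) := dist_triangle _ _ _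
  rw [dist_comm (c k) (c i)] at h4
  rw [dist_comm (c i) (f t₁)] at h4
  have h5 : s*((k:ℝ) - (i:ℝ)) ≤ s*(A*(2*D₀) + C) := mul_le_mul_of_nonneg_left hki (by linarith)
  linarith

/-- Gromov products along a quasi-geodesic chain are bounded. -/
lemma morse_gp (s A C : ℝ) (hδ : 0 ≤ δ) (hs : 1 ≤ s) (hA : 1 ≤ A) (hC : 0 ≤ C)
    (hgeo : GeodesicSpace X) (hrips : RipsHyperbolic X δ) :
    ∃ D₁ : ℝ, 0 ≤ D₁ ∧ ∀ (n : ℕ) (c : ℕ → X),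
      (∀ i < n, dist (c i) (c (i+1)) ≤ s) →
      (∀ i, i ≤ n → ∀ j, j ≤ n → |(i:ℝ) - (j:ℝ)| ≤ A * dist (c i) (c j) + C) →
      ∀ k, k ≤ n → gromovProd dist (c k) (c 0) (c n) ≤ D₁ := by
  obtain ⟨D₁, hD₁0, hD₁⟩ := morse_a s A C hδ hs hA hC hgeo hrips
  refine ⟨D₁, hD₁0, ?_⟩
  intro n c hc hlow k hk
  obtain ⟨f, hf⟩ := hgeo (c 0) (c n)
  obtain ⟨p, hp, hdp⟩ := hD₁ n c f hc hlow hf k hk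
  exact le_trans (gp_le_geod hf hp) hdp

end MorseA
section Action

variable {G : Type*} [Group G] {X : Type*} [MetricSpace X] {act : G → X → X}

/-- Quasi-isometric orbit bounds at a given basepoint (lower bound pre-multiplied). -/
def QIat (act : G → X → X) (g : G) (x : X) (Ag Bg : ℝ) : Prop :=
  ∀ m n : ℤ, (|(m:ℝ) - (n:ℝ)| ≤ Ag * dist (act (g^m) x) (act (g^n) x) + Ag*Bg) ∧
    dist (act (g^m) x) (act (g^n) x) ≤ Ag * |(m:ℝ) - (n:ℝ)| + Bg

lemma lox_to_QIat {g : G} (hact : IsIsomAction G X act)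
    (hg : LoxodromicWith (fun a b : X => dist a b) act g) (x : X) :
    ∃ Ag Bg : ℝ, 1 ≤ Ag ∧ 0 ≤ Bg ∧ QIat act g x Ag Bg := by
  obtain ⟨x₀, A, B, hA, hB, hq⟩ := hg
  have hA0 : 0 < A := lt_of_lt_of_le zero_lt_one hA
  refine ⟨A, B + 2*dist x x₀, hA, by positivity, ?_⟩
  intro m n
  obtain ⟨h1, h2⟩ := hq m n
  simp only [zdist] at h1 h2
  have e1 : dist (act (g^m) x) (act (g^m) x₀) = dist x x₀ := hact.isometry _ x x₀
  have e2 : dist (act (g^n) x₀) (act (g^n) x) = dist x x₀ := by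
    rw [dist_comm]; exact hact.isometry _ x x₀
  have ht1 : dist (act (g^m) x) (act (g^n) x) ≤
      dist (act (g^m) x) (act (g^m) x₀) + dist (act (g^m) x₀) (act (g^n) x₀) +
      dist (act (g^n) x₀) (act (g^n) x) := dist_triangle4 _ _ _ _
  have ht2 : dist (act (g^m) x₀) (act (g^n) x₀) ≤
      dist (act (g^m) x₀) (act (g^m) x) + dist (act (g^m) x) (act (g^n) x) +
      dist (act (g^n) x) (act (g^n) x₀) := dist_triangle4 _ _ _ _
  have e3 : dist (act (g^m) x₀) (act (g^m) x) = dist x x₀ := by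
    rw [dist_comm]; exact hact.isometry _ x x₀
  have e4 : dist (act (g^n) x) (act (g^n) x₀) = dist x x₀ := hact.isometry _ x x₀
  constructor
  · have hmul : |(m:ℝ) - (n:ℝ)| ≤ A * dist (act (g^m) x₀) (act (g^n) x₀) + A*B := by
      have := (div_le_iff₀ hA0).1 (by linarith : |(m:ℝ) - (n:ℝ)| / A ≤
        dist (act (g^m) x₀) (act (g^n) x₀) + B)
      linarith [this]
    have hd : dist (act (g^m) x₀) (act (g^n) x₀) ≤
        dist (act (g^m) x) (act (g^n) x) + 2*dist x x₀ := by
      rw [e3, e4] at ht2; linarith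
    have := mul_le_mul_of_nonneg_left hd (le_of_lt hA0)
    nlinarith
  · rw [e1, e2] at ht1
    linarith

lemma act_inv_act (hact : IsIsomAction G X act) (e : G) (y : X) :
    act e⁻¹ (act e y) = y := by
  rw [← hact.act_mul, inv_mul_cancel, hact.act_one]

lemma act_one_zpow (hact : IsIsomAction G X act) (g : G) (x : X) :
    act (g ^ (0:ℤ)) x = x := by rw [zpow_zero, hact.act_one]

lemma gp_act (hact : IsIsomAction G X act) (e : G) (w u v : X) :
    gromovProd dist (act e w) (act e u) (act e v) = gromovProd dist w u v := by
  simp only [gromovProd, hact.isometry]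

lemma gp_translate (hact : IsIsomAction G X act) (e : G) (x y : X) :
    gromovProd dist x (act e y) (act e x) =
      dist x (act e x) - gromovProd dist x y (act e⁻¹ x) := by
  have h1 := gp_id (w := act e x) (p := act e y) (x := x)
  have h2 : gromovProd dist (act e x) (act e y) x = gromovProd dist x y (act e⁻¹ x) := by
    have h3 := gp_act hact e x y (act e⁻¹ x)
    rw [← hact.act_mul, mul_inv_cancel, hact.act_one] at h3
    exact h3
  linarith

/-- An orbit chain `i ↦ g^(a+ζi)·x` satisfies the chain hypotheses. -/
lemma orbit_chain {g : G} {x : X} {Ag Bg : ℝ} (hQ : QIat act g x Ag Bg)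
    (hAg : 1 ≤ Ag) (hBg : 0 ≤ Bg) (ζ a : ℤ) (hζ : ζ = 1 ∨ ζ = -1) (n : ℕ) :
    (∀ i < n, dist ((fun i : ℕ => act (g ^ (a + ζ * (i:ℤ))) x) i)
        ((fun i : ℕ => act (g ^ (a + ζ * (i:ℤ))) x) (i+1)) ≤ Ag + Bg) ∧
    (∀ i, i ≤ n → ∀ j, j ≤ n → |(i:ℝ) - (j:ℝ)| ≤
      Ag * dist ((fun i : ℕ => act (g ^ (a + ζ * (i:ℤ))) x) i)
        ((fun i : ℕ => act (g ^ (a + ζ * (i:ℤ))) x) j) + Ag*Bg) := by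
  have hζr : |(ζ:ℝ)| = 1 := by rcases hζ with h | h <;> rw [h] <;> norm_num
  constructor
  · intro i hi
    have h := (hQ (a + ζ * (i:ℤ)) (a + ζ * ((i:ℤ)+1))).2
    push_cast at h
    have e : ((a:ℝ) + (ζ:ℝ) * (i:ℝ)) - ((a:ℝ) + (ζ:ℝ) * ((i:ℝ)+1)) = -(ζ:ℝ) := by ring
    rw [e, abs_neg, hζr] at h
    show dist (act (g ^ (a + ζ * (i:ℤ))) x) (act (g ^ (a + ζ * (((i:ℕ)+1:ℕ):ℤ))) x) ≤ Ag + Bg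
    have e2 : a + ζ * (((i:ℕ)+1:ℕ):ℤ) = a + ζ * ((i:ℤ)+1) := by push_cast; ring
    rw [e2]
    calc dist (act (g ^ (a + ζ * (i:ℤ))) x) (act (g ^ (a + ζ * ((i:ℤ)+1))) x) ≤ Ag * 1 + Bg := h
      _ = Ag + Bg := by ring
  · intro i _ j _
    have h := (hQ (a + ζ * (i:ℤ)) (a + ζ * (j:ℤ))).1
    push_cast at h
    have e : ((a:ℝ) + (ζ:ℝ) * (i:ℝ)) - ((a:ℝ) + (ζ:ℝ) * (j:ℝ)) = (ζ:ℝ) * ((i:ℝ) - (j:ℝ)) := by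
      ring
    rw [e, abs_mul, hζr, one_mul] at h
    exact h

/-- Gromov products along a loxodromic orbit are uniformly bounded. -/
lemma gp_orbit {δ : ℝ} {g : G} {x : X} {Ag Bg : ℝ} (hδ : 0 ≤ δ)
    (hgeo : GeodesicSpace X) (hrips : RipsHyperbolic X δ)
    (hQ : QIat act g x Ag Bg) (hAg : 1 ≤ Ag) (hBg : 0 ≤ Bg) :
    ∃ D₁ : ℝ, 0 ≤ D₁ ∧ ∀ a b k : ℤ, a ≤ k → k ≤ b →
      gromovProd dist (act (g^k) x) (act (g^a) x) (act (g^b) x) ≤ D₁ := by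
  obtain ⟨D₁, hD₁0, hD₁⟩ := morse_gp (Ag + Bg) Ag (Ag*Bg) hδ (by linarith) hAg
    (by positivity) hgeo hrips
  refine ⟨D₁, hD₁0, ?_⟩
  intro a b k hak hkb
  set c : ℕ → X := fun i : ℕ => act (g ^ (a + 1 * (i:ℤ))) x with hcdef
  obtain ⟨hsteps, hlow⟩ := orbit_chain hQ hAg hBg 1 a (Or.inl rfl) (b - a).toNat
  have hc0 : c 0 = act (g^a) x := by simp [hcdef]
  have hcn : c (b - a).toNat = act (g^b) x := by
    simp only [hcdef, one_mul]
    congr 2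
    omega
  have hck : c (k - a).toNat = act (g^k) x := by
    simp only [hcdef, one_mul]
    congr 2
    omega
  have hkn : (k - a).toNat ≤ (b - a).toNat := by omega
  have := hD₁ (b - a).toNat c hsteps hlow (k - a).toNat hkn
  rw [hc0, hcn, hck] at this
  exact this

end Action
section RayClose

variable {G : Type*} [Group G] {X : Type*} [MetricSpace X] {act : G → X → X} {δ : ℝ}

/-- Initial segments of geodesics with a large Gromov product fellow-travel. -/
lemma initial_close (hδ : 0 ≤ δ) (hgeo : GeodesicSpace X) (hrips : RipsHyperbolic X δ)
    {x u v : X} {fu fv : ℝ → X}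
    (hfu : IsGeodesicSeg x u fu) (hfv : IsGeodesicSeg x v fv) {p : X}
    (hp : p ∈ geodSet x u fu)
    (hclose : dist x p ≤ gromovProd dist x u v - δ - 1) :
    ∃ q ∈ geodSet x v fv, dist p q ≤ δ := by
  obtain ⟨fuv, hfuv⟩ := hgeo u v
  obtain ⟨h1, -, -⟩ := hrips x u v fu fuv fv hfu hfuv hfv
  obtain ⟨q, hq, hdq⟩ := h1 p hp
  rcases hq with hq | hq
  · exfalso
    have h2 := gp_le_geod hfuv hq (x := x)
    have h3 := dist_triangle x p q
    linarith
  · exact ⟨q, hq, hdq⟩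

/-- If Gromov products between two orbit rays are unbounded, every point of the first
ray is uniformly close to the second ray. -/
lemma ray_close_onesided (hδ : 0 ≤ δ) (hgeo : GeodesicSpace X)
    (hrips : RipsHyperbolic X δ) (hact : IsIsomAction G X act)
    {g h : G} {x : X} {Ag Bg Ah Bh : ℝ}
    (hQg : QIat act g x Ag Bg) (hAg : 1 ≤ Ag) (hBg : 0 ≤ Bg)
    (hQh : QIat act h x Ah Bh) (hAh : 1 ≤ Ah) (hBh : 0 ≤ Bh)
    (ζ ξ : ℤ) (hζ : ζ = 1 ∨ ζ = -1) (hξ : ξ = 1 ∨ ξ = -1)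
    (hU : ∀ R : ℝ, ∃ n m : ℕ,
      R ≤ gromovProd dist x (act (g^(ζ*(n:ℤ))) x) (act (h^(ξ*(m:ℤ))) x)) :
    ∃ Cc : ℝ, ∀ l : ℕ, ∃ j : ℕ,
      dist (act (g^(ζ*(l:ℤ))) x) (act (h^(ξ*(j:ℤ))) x) ≤ Cc := by
  have hζr : |(ζ:ℝ)| = 1 := by rcases hζ with h' | h' <;> rw [h'] <;> norm_num
  obtain ⟨D₁, hD₁0, hD₁⟩ := morse_a (Ag+Bg) Ag (Ag*Bg) hδ (by linarith) hAg
    (by positivity) hgeo hrips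
  obtain ⟨D₀, hD₀0, hD₀⟩ := morse_b (Ah+Bh) Ah (Ah*Bh) hδ (by linarith) hAh
    (by positivity) hgeo hrips
  refine ⟨D₁ + δ + D₀, ?_⟩
  intro l
  obtain ⟨n, m, hnm⟩ := hU (Ag*(l:ℝ) + Bg + D₁ + δ + 1)
  set u := act (g^(ζ*(n:ℤ))) x with hudef
  set v := act (h^(ξ*(m:ℤ))) x with hvdef
  -- distance from x to orbit points of g
  have hxg : ∀ i : ℕ, dist x (act (g^(ζ*(i:ℤ))) x) ≤ Ag * (i:ℝ) + Bg := by
    intro i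
    have h1 := (hQg 0 (ζ*(i:ℤ))).2
    have e : |((0:ℤ):ℝ) - ((ζ*(i:ℤ) : ℤ):ℝ)| = (i:ℝ) := by
      push_cast
      rw [zero_sub, abs_neg, abs_mul, hζr, one_mul, abs_of_nonneg (Nat.cast_nonneg i)]
    rw [e] at h1
    have e2 : act (g^(0:ℤ)) x = x := act_one_zpow hact g x
    rw [e2] at h1
    exact h1
  -- l ≤ n
  have hgpu : gromovProd dist x u v ≤ dist x u := gp_le_left _ _ _
  have hln : l ≤ n := by
    by_contra hcon
    push_neg at hcon
    have h1 : (n:ℝ) ≤ (l:ℝ) := by exact_mod_cast le_of_lt hcon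
    have h2 := hxg n
    have hAg0 : 0 < Ag := lt_of_lt_of_le zero_lt_one hAg
    nlinarith [hnm, hgpu]
  -- the g-orbit chain from 0 to n
  set cg : ℕ → X := fun i => act (g^((0:ℤ) + ζ*(i:ℤ))) x with hcgdef
  obtain ⟨hsg, hlg⟩ := orbit_chain hQg hAg hBg ζ 0 hζ n
  obtain ⟨f, hfg⟩ := hgeo (cg 0) (cg n)
  obtain ⟨p, hp, hdp⟩ := hD₁ n cg f hsg hlg hfg l hln
  have hcg0 : cg 0 = x := by
    simp only [hcgdef, Nat.cast_zero, mul_zero, add_zero]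
    exact act_one_zpow hact g x
  have hcgi : ∀ i : ℕ, cg i = act (g^(ζ*(i:ℤ))) x := by
    intro i
    simp only [hcgdef, zero_add]
  rw [hcg0, hcgi n, ← hudef] at hfg hp
  have hfg' : IsGeodesicSeg x u f := hfg
  have hp' : p ∈ geodSet x u f := hp
  -- bound dist x p
  have hdxp : dist x p ≤ Ag*(l:ℝ) + Bg + D₁ := by
    have h1 : dist x p ≤ dist x (cg l) + dist (cg l) p := dist_triangle _ _ _
    have h2 := hxg l
    rw [← hcgi l] at h2
    linarith
  obtain ⟨fv, hfv⟩ := hgeo x v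
  obtain ⟨q, hqv, hdq⟩ := initial_close hδ hgeo hrips hfg' hfv hp' (by linarith)
  -- h-orbit chain from 0 to m and Morse (b)
  set ch : ℕ → X := fun i => act (h^((0:ℤ) + ξ*(i:ℤ))) x with hchdef
  obtain ⟨hsh, hlh⟩ := orbit_chain hQh hAh hBh ξ 0 hξ m
  have hch0 : ch 0 = x := by
    simp only [hchdef, Nat.cast_zero, mul_zero, add_zero]
    exact act_one_zpow hact h x
  have hchi : ∀ i : ℕ, ch i = act (h^(ξ*(i:ℤ))) x := by
    intro i
    simp only [hchdef, zero_add]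
  rw [hvdef, ← hchi m, ← hch0] at hfv hqv
  have hfv' : IsGeodesicSeg (ch 0) (ch m) fv := hfv
  have hqv' : q ∈ geodSet (ch 0) (ch m) fv := hqv
  obtain ⟨t, htI, rfl⟩ := mem_geodSet.1 hqv'
  obtain ⟨j, hjm, hdj⟩ := hD₀ m ch fv hsh hlh hfv' t htI
  refine ⟨j, ?_⟩
  have h1 : dist (cg l) (ch j) ≤ dist (cg l) p + dist p (fv t) + dist (fv t) (ch j) :=
    dist_triangle4 _ _ _ _
  rw [hcgi l, hchi j] at h1
  rw [hcgi l] at hdp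
  rw [hchi j] at hdj
  linarith

end RayClose
section FHC

variable {G : Type*} [Group G] {X : Type*} [MetricSpace X] {act : G → X → X}

/-- Sign attached to a ray direction. -/
def sgn (s : Bool) : ℤ := if s then 1 else -1

lemma sgn_cases (s : Bool) : sgn s = 1 ∨ sgn s = -1 := by cases s <;> simp [sgn]

lemma sgn_not (s : Bool) : sgn (!s) = - sgn s := by cases s <;> simp [sgn]

lemma orbitRay_eq (g : G) (x : X) (s : Bool) :
    orbitRay act g x s = Set.range (fun n : ℕ => act (g ^ (sgn s * (n:ℤ))) x) := by
  unfold orbitRay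
  congr 1
  funext n
  cases s <;> simp [sgn]

lemma mem_orbitRay {g : G} {x : X} {s : Bool} {y : X} :
    y ∈ orbitRay act g x s ↔ ∃ n : ℕ, act (g ^ (sgn s * (n:ℤ))) x = y := by
  rw [orbitRay_eq]
  exact Set.mem_range

lemma range_eq_rays (g : G) (x : X) :
    (Set.range fun n : ℤ => act (g ^ n) x) = orbitRay act g x true ∪ orbitRay act g x false := by
  ext y
  constructor
  · rintro ⟨n, rfl⟩
    rcases le_or_gt 0 n with hn | hn
    · left
      rw [mem_orbitRay]
      refine ⟨n.toNat, ?_⟩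
      simp [sgn, Int.toNat_of_nonneg hn]
    · right
      rw [mem_orbitRay]
      refine ⟨(-n).toNat, ?_⟩
      have : sgn false * ((-n).toNat : ℤ) = n := by
        simp [sgn]
        omega
      rw [this]
  · rintro (hy | hy) <;> rw [mem_orbitRay] at hy <;> obtain ⟨n, rfl⟩ := hy
    · exact ⟨sgn true * (n:ℤ), rfl⟩
    · exact ⟨sgn false * (n:ℤ), rfl⟩

lemma FHC_symm {A B : Set X}
    (h : FinHausdorffClose (fun a b : X => dist a b) A B) :
    FinHausdorffClose (fun a b : X => dist a b) B A := by
  obtain ⟨C, h1, h2⟩ := h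
  refine ⟨C, ?_, ?_⟩
  · intro b hb
    obtain ⟨a, ha, hd⟩ := h2 b hb
    exact ⟨a, ha, by simpa [dist_comm b a] using hd⟩
  · intro a ha
    obtain ⟨b, hb, hd⟩ := h1 a ha
    exact ⟨b, hb, by simpa [dist_comm a b] using hd⟩

lemma FHC_trans {A B C' : Set X}
    (h : FinHausdorffClose (fun a b : X => dist a b) A B)
    (h' : FinHausdorffClose (fun a b : X => dist a b) B C') :
    FinHausdorffClose (fun a b : X => dist a b) A C' := by
  obtain ⟨C1, h1, h2⟩ := h
  obtain ⟨C2, h3, h4⟩ := h'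
  refine ⟨C1 + C2, ?_, ?_⟩
  · intro a ha
    obtain ⟨b, hb, hd1⟩ := h1 a ha
    obtain ⟨c, hc, hd2⟩ := h3 b hb
    exact ⟨c, hc, le_trans (dist_triangle a b c) (by exact add_le_add hd1 hd2)⟩
  · intro c hc
    obtain ⟨b, hb, hd2⟩ := h4 c hc
    obtain ⟨a, ha, hd1⟩ := h2 b hb
    refine ⟨a, ha, ?_⟩
    calc dist a c ≤ dist a b + dist b c := dist_triangle _ _ _
      _ ≤ C1 + C2 := add_le_add hd1 hd2
  
lemma FHC_union {A₁ A₂ B₁ B₂ : Set X}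
    (h : FinHausdorffClose (fun a b : X => dist a b) A₁ B₁)
    (h' : FinHausdorffClose (fun a b : X => dist a b) A₂ B₂) :
    FinHausdorffClose (fun a b : X => dist a b) (A₁ ∪ A₂) (B₁ ∪ B₂) := by
  obtain ⟨C1, h1, h2⟩ := h
  obtain ⟨C2, h3, h4⟩ := h'
  refine ⟨max C1 C2, ?_, ?_⟩
  · rintro a (ha | ha)
    · obtain ⟨b, hb, hd⟩ := h1 a ha
      exact ⟨b, Or.inl hb, le_trans hd (le_max_left _ _)⟩
    · obtain ⟨b, hb, hd⟩ := h3 a ha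
      exact ⟨b, Or.inr hb, le_trans hd (le_max_right _ _)⟩
  · rintro b (hb | hb)
    · obtain ⟨a, ha, hd⟩ := h2 b hb
      exact ⟨a, Or.inl ha, le_trans hd (le_max_left _ _)⟩
    · obtain ⟨a, ha, hd⟩ := h4 b hb
      exact ⟨a, Or.inr ha, le_trans hd (le_max_right _ _)⟩

/-- Opposite rays of a loxodromic are not Hausdorff close. -/
lemma rays_opp_far {g : G} {x : X} {Ag Bg : ℝ} (hQ : QIat act g x Ag Bg)
    (hAg : 1 ≤ Ag) (hBg : 0 ≤ Bg) (s : Bool) :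
    ¬ FinHausdorffClose (fun a b : X => dist a b)
      (orbitRay act g x s) (orbitRay act g x (!s)) := by
  rintro ⟨C, -, h2⟩
  set n : ℕ := ⌈Ag*(C+Bg)⌉₊ + 1 with hndef
  obtain ⟨a, ha, hd⟩ := h2 (act (g ^ (sgn (!s) * (n:ℤ))) x)
    (mem_orbitRay.2 ⟨n, rfl⟩)
  obtain ⟨l, rfl⟩ := mem_orbitRay.1 ha
  have hC0 : (0:ℝ) ≤ C := le_trans dist_nonneg hd
  have hlow := (hQ (sgn s * (l:ℤ)) (sgn (!s) * (n:ℤ))).1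
  have hσr : |((sgn s : ℤ):ℝ)| = 1 := by
    rcases sgn_cases s with h | h <;> rw [h] <;> norm_num
  have e : ((sgn s * (l:ℤ) : ℤ):ℝ) - ((sgn (!s) * (n:ℤ) : ℤ):ℝ) =
      ((sgn s : ℤ):ℝ) * ((l:ℝ) + (n:ℝ)) := by
    rw [sgn_not]
    push_cast
    ring
  rw [e, abs_mul, hσr, one_mul, abs_of_nonneg (by positivity)] at hlow
  have hAg0 : 0 < Ag := lt_of_lt_of_le zero_lt_one hAg
  have h3 : (l:ℝ) + (n:ℝ) ≤ Ag*(C+Bg) := by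
    have h4 : Ag * dist (act (g ^ (sgn s * (l:ℤ))) x) (act (g ^ (sgn (!s) * (n:ℤ))) x)
        ≤ Ag * C := mul_le_mul_of_nonneg_left hd (le_of_lt hAg0)
    nlinarith
  have h5 : Ag*(C+Bg) ≤ (⌈Ag*(C+Bg)⌉₊ : ℝ) := Nat.le_ceil _
  have h6 : ((n:ℕ):ℝ) = (⌈Ag*(C+Bg)⌉₊ : ℝ) + 1 := by
    rw [hndef]
    push_cast
    ring
  have h7 : (0:ℝ) ≤ (l:ℝ) := Nat.cast_nonneg _
  linarith

end FHC
section Select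

variable {G : Type*} [Group G] {X : Type*} [MetricSpace X] {act : G → X → X} {δ : ℝ}

lemma cross_bound (hδ : 0 ≤ δ) (hgeo : GeodesicSpace X) (hrips : RipsHyperbolic X δ)
    (hact : IsIsomAction G X act) {g h : G} {x : X} {Ag Bg Ah Bh : ℝ}
    (hQg : QIat act g x Ag Bg) (hAg : 1 ≤ Ag) (hBg : 0 ≤ Bg)
    (hQh : QIat act h x Ah Bh) (hAh : 1 ≤ Ah) (hBh : 0 ≤ Bh) (s t : Bool)
    (hnc : ¬ FinHausdorffClose (fun a b : X => dist a b)
      (orbitRay act g x s) (orbitRay act h x t)) :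
    ∃ K, 0 ≤ K ∧ ∀ n m : ℕ,
      gromovProd dist x (act (g^(sgn s * (n:ℤ))) x) (act (h^(sgn t * (m:ℤ))) x) ≤ K := by
  by_contra hcon
  push_neg at hcon
  have hU : ∀ R : ℝ, ∃ n m : ℕ,
      R ≤ gromovProd dist x (act (g^(sgn s * (n:ℤ))) x) (act (h^(sgn t * (m:ℤ))) x) := by
    intro R
    obtain ⟨n, m, hn⟩ := hcon (max R 0) (le_max_right _ _)
    exact ⟨n, m, le_trans (le_max_left _ _) (le_of_lt hn)⟩
  have hU' : ∀ R : ℝ, ∃ n m : ℕ,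
      R ≤ gromovProd dist x (act (h^(sgn t * (n:ℤ))) x) (act (g^(sgn s * (m:ℤ))) x) := by
    intro R
    obtain ⟨n, m, hn⟩ := hU R
    exact ⟨m, n, by rw [gp_comm]; exact hn⟩
  obtain ⟨Cc, hCc⟩ := ray_close_onesided hδ hgeo hrips hact hQg hAg hBg hQh hAh hBh
    (sgn s) (sgn t) (sgn_cases s) (sgn_cases t) hU
  obtain ⟨Cc', hCc'⟩ := ray_close_onesided hδ hgeo hrips hact hQh hAh hBh hQg hAg hBg
    (sgn t) (sgn s) (sgn_cases t) (sgn_cases s) hU'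
  apply hnc
  refine ⟨max Cc Cc', ?_, ?_⟩
  · intro a ha
    obtain ⟨l, rfl⟩ := mem_orbitRay.1 ha
    obtain ⟨j, hj⟩ := hCc l
    exact ⟨act (h^(sgn t * (j:ℤ))) x, mem_orbitRay.2 ⟨j, rfl⟩,
      le_trans hj (le_max_left _ _)⟩
  · intro b hb
    obtain ⟨l, rfl⟩ := mem_orbitRay.1 hb
    obtain ⟨j, hj⟩ := hCc' l
    refine ⟨act (g^(sgn s * (j:ℤ))) x, mem_orbitRay.2 ⟨j, rfl⟩, ?_⟩
    have h2 : dist (act (g^(sgn s * (j:ℤ))) x) (act (h^(sgn t * (l:ℤ))) x) ≤ max Cc Cc' := by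
      rw [dist_comm]
      exact le_trans hj (le_max_right _ _)
    exact h2

lemma select_signs (hact : IsIsomAction G X act) {g h : G} {x : X} {Ag Bg Ah Bh : ℝ}
    (hQg : QIat act g x Ag Bg) (hAg : 1 ≤ Ag) (hBg : 0 ≤ Bg)
    (hQh : QIat act h x Ah Bh) (hAh : 1 ≤ Ah) (hBh : 0 ≤ Bh)
    (hfar : ¬ FinHausdorffClose (fun a b : X => dist a b)
      (Set.range fun n : ℤ => act (g ^ n) x) (Set.range fun n : ℤ => act (h ^ n) x)) :
    ∃ s t : Bool,
      ¬ FinHausdorffClose (fun a b : X => dist a b) (orbitRay act g x s) (orbitRay act h x t) ∧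
      ¬ FinHausdorffClose (fun a b : X => dist a b) (orbitRay act g x s) (orbitRay act h x (!t)) ∧
      ¬ FinHausdorffClose (fun a b : X => dist a b) (orbitRay act g x (!s)) (orbitRay act h x t) := by
  set CL : Bool → Bool → Prop := fun s t => FinHausdorffClose (fun a b : X => dist a b)
    (orbitRay act g x s) (orbitRay act h x t) with hCLdef
  have ht_inj : ∀ s t t', CL s t → CL s t' → t = t' := by
    intro s t t' h1 h2
    by_contra hne
    have ht' : t' = !t := by cases t <;> cases t' <;> simp_all
    subst ht'
    exact rays_opp_far hQh hAh hBh t (FHC_trans (FHC_symm h1) h2)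
  have hs_inj : ∀ s s' t, CL s t → CL s' t → s = s' := by
    intro s s' t h1 h2
    by_contra hne
    have hs' : s' = !s := by cases s <;> cases s' <;> simp_all
    subst hs'
    exact rays_opp_far hQg hAg hBg s (FHC_trans h1 (FHC_symm h2))
  have hline : ∀ s t, CL s t → CL (!s) (!t) → False := by
    intro s t h1 h2
    apply hfar
    rw [range_eq_rays g x, range_eq_rays h x]
    have eg : orbitRay act g x s ∪ orbitRay act g x (!s) =
        orbitRay act g x true ∪ orbitRay act g x false := by
      cases s
      · simp [Set.union_comm]
      · simp
    have eh : orbitRay act h x t ∪ orbitRay act h x (!t) =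
        orbitRay act h x true ∪ orbitRay act h x false := by
      cases t
      · simp [Set.union_comm]
      · simp
    have := FHC_union h1 h2
    rwa [eg, eh] at this
  by_cases hex : ∃ s t, CL s t
  · obtain ⟨s₀, t₀, h₀⟩ := hex
    refine ⟨!s₀, !t₀, ?_, ?_, ?_⟩
    · intro hcl
      exact hline s₀ t₀ h₀ hcl
    · intro hcl
      rw [Bool.not_not] at hcl
      have := hs_inj s₀ (!s₀) t₀ h₀ hcl
      simp at this
    · intro hcl
      rw [Bool.not_not] at hcl
      have := ht_inj s₀ t₀ (!t₀) h₀ hcl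
      simp at this
  · push_neg at hex
    exact ⟨true, true, hex _ _, hex _ _, hex _ _⟩

end Select
section PingPong

variable {G : Type*} [Group G] {X : Type*} [MetricSpace X] {act : G → X → X} {δ : ℝ}

lemma pingpong (hδ : 0 ≤ δ) (hgeo : GeodesicSpace X) (hrips : RipsHyperbolic X δ)
    (hact : IsIsomAction G X act) (x : X) (a b : G) (K : ℝ) (hK0 : 0 ≤ K)
    (h_aa : gromovProd dist x (act a x) (act a⁻¹ x) ≤ K)
    (h_bb : gromovProd dist x (act b x) (act b⁻¹ x) ≤ K)
    (h_ab : gromovProd dist x (act a x) (act b⁻¹ x) ≤ K)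
    (h_ba : gromovProd dist x (act b x) (act a⁻¹ x) ≤ K)
    (h_pp : gromovProd dist x (act a x) (act b x) ≤ K)
    (h_da : 2*K + 6*δ + 1 ≤ dist x (act a x))
    (h_db : 2*K + 6*δ + 1 ≤ dist x (act b x)) :
    GenerateFreeSubsemigroup a b := by
  have h4pt := four_point (δ := δ) hgeo hrips
  set T : ℝ := K + 3*δ + 1 with hTdef
  set U : G → Set X := fun e => {y | T ≤ gromovProd dist x y (act e x)} with hUdef
  have hgpxx : ∀ z : X, gromovProd dist x x z = 0 := by
    intro z
    simp [gromovProd, dist_self]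
  have hxU : ∀ e : G, x ∉ U e := by
    intro e hx
    simp only [hUdef, Set.mem_setOf_eq, hgpxx] at hx
    rw [hTdef] at hx
    linarith
  have key : ∀ e : G, gromovProd dist x (act a x) (act e⁻¹ x) ≤ K →
      gromovProd dist x (act b x) (act e⁻¹ x) ≤ K →
      ∀ y, (y = x ∨ y ∈ U a ∨ y ∈ U b) → gromovProd dist x y (act e⁻¹ x) ≤ K + 3*δ := by
    intro e hea heb y hy
    rcases hy with rfl | hy | hy
    · rw [hgpxx]
      linarith
    · by_contra hc
      push_neg at hc
      simp only [hUdef, Set.mem_setOf_eq] at hy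
      have h4 := h4pt x (act a x) (act e⁻¹ x) y
      have hcy : gromovProd dist x (act a x) y = gromovProd dist x y (act a x) :=
        gp_comm _ _ _
      have hmin : K + 3*δ < min (gromovProd dist x (act a x) y)
          (gromovProd dist x y (act e⁻¹ x)) := by
        apply lt_min
        · rw [hcy, hTdef] at *
          linarith
        · exact hc
      linarith
    · by_contra hc
      push_neg at hc
      simp only [hUdef, Set.mem_setOf_eq] at hy
      have h4 := h4pt x (act b x) (act e⁻¹ x) y
      have hcy : gromovProd dist x (act b x) y = gromovProd dist x y (act b x) :=
        gp_comm _ _ _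
      have hmin : K + 3*δ < min (gromovProd dist x (act b x) y)
          (gromovProd dist x y (act e⁻¹ x)) := by
        apply lt_min
        · rw [hcy, hTdef] at *
          linarith
        · exact hc
      linarith
  have hinv : ∀ e : G, 2*K + 6*δ + 1 ≤ dist x (act e x) →
      gromovProd dist x (act a x) (act e⁻¹ x) ≤ K →
      gromovProd dist x (act b x) (act e⁻¹ x) ≤ K →
      ∀ y, (y = x ∨ y ∈ U a ∨ y ∈ U b) → act e y ∈ U e := by
    intro e hde hea heb y hy
    have hgp := key e hea heb y hy
    have htr := gp_translate hact e x y
    simp only [hUdef, Set.mem_setOf_eq, hTdef]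
    linarith
  have hdisj : ∀ y, y ∈ U a → y ∈ U b → False := by
    intro y hya hyb
    simp only [hUdef, Set.mem_setOf_eq] at hya hyb
    have h4 := h4pt x (act a x) (act b x) y
    have hc1 : gromovProd dist x (act a x) y = gromovProd dist x y (act a x) :=
      gp_comm _ _ _
    have hc2 : gromovProd dist x y (act b x) = gromovProd dist x (act b x) y :=
      gp_comm _ _ _
    have hmin : T ≤ min (gromovProd dist x (act a x) y) (gromovProd dist x y (act b x)) := by
      apply le_min
      · rw [hc1]; exact hya
      · exact hyb
    rw [hTdef] at hmin
    linarith
  set F : Bool → G := fun c => if c then a else b with hFdef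
  have hFU : ∀ (c : Bool) (y : X), (y = x ∨ y ∈ U a ∨ y ∈ U b) → act (F c) y ∈ U (F c) := by
    intro c y hy
    cases c
    · simp only [hFdef, Bool.false_eq_true, if_neg, ite_false]
      exact hinv b h_db h_ab h_bb y hy
    · simp only [hFdef, ite_true]
      exact hinv a h_da h_aa h_ba y hy
  have hUab : ∀ c : Bool, ∀ y, y ∈ U (F c) → (y = x ∨ y ∈ U a ∨ y ∈ U b) := by
    intro c y hy
    cases c
    · simp only [hFdef, Bool.false_eq_true, if_neg, ite_false] at hy
      exact Or.inr (Or.inr hy)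
    · simp only [hFdef, ite_true] at hy
      exact Or.inr (Or.inl hy)
  have hword : ∀ w : List Bool, w ≠ [] → act ((w.map F).prod) x ∈ U (F w.headI) := by
    intro w
    induction w with
    | nil => intro hne; exact absurd rfl hne
    | cons c w' ih =>
      intro _
      rcases eq_or_ne w' [] with rfl | hw'
      · simp only [List.map_cons, List.map_nil, List.prod_cons, List.prod_nil, mul_one,
          List.headI_cons]
        exact hFU c x (Or.inl rfl)
      · have hmem := ih hw'
        simp only [List.map_cons, List.prod_cons, List.headI_cons]
        rw [hact.act_mul]
        exact hFU c _ (hUab _ _ hmem)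
  suffices hmain : ∀ w₁ w₂ : List Bool, w₁ ≠ [] → w₂ ≠ [] →
      ((w₁.map F).prod = (w₂.map F).prod) → w₁ = w₂ by
    intro w₁ w₂ h1 h2 heq
    exact hmain w₁ w₂ h1 h2 heq
  intro w₁
  induction w₁ with
  | nil => intro w₂ h1 _ _; exact absurd rfl h1
  | cons c₁ t₁ ih =>
    intro w₂ h1ne h2ne heq
    rcases w₂ with _ | ⟨c₂, t₂⟩
    · exact absurd rfl h2ne
    · by_cases hcc : c₁ = c₂
      · subst hcc
        simp only [List.map_cons, List.prod_cons] at heq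
        have hteq : (t₁.map F).prod = (t₂.map F).prod := mul_left_cancel heq
        rcases eq_or_ne t₁ [] with rfl | ht₁
        · rcases eq_or_ne t₂ [] with rfl | ht₂
          · rfl
          · exfalso
            have hw := hword t₂ ht₂
            simp only [List.map_nil, List.prod_nil] at hteq
            rw [← hteq, hact.act_one] at hw
            exact hxU _ hw
        · rcases eq_or_ne t₂ [] with rfl | ht₂
          · exfalso
            have hw := hword t₁ ht₁
            simp only [List.map_nil, List.prod_nil] at hteq
            rw [hteq, hact.act_one] at hw
            exact hxU _ hw
          · have := ih t₂ ht₁ ht₂ hteq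
            rw [this]
      · exfalso
        have p1 := hword (c₁ :: t₁) (List.cons_ne_nil _ _)
        have p2 := hword (c₂ :: t₂) (List.cons_ne_nil _ _)
        rw [heq] at p1
        simp only [List.headI_cons] at p1 p2
        have hcc' : (c₁ = true ∧ c₂ = false) ∨ (c₁ = false ∧ c₂ = true) := by
          cases c₁ <;> cases c₂ <;> simp_all
        rcases hcc' with ⟨rfl, rfl⟩ | ⟨rfl, rfl⟩
        · simp only [hFdef, ite_true, Bool.false_eq_true, ite_false] at p1 p2
          exact hdisj _ p1 p2
        · simp only [hFdef, ite_true, Bool.false_eq_true, ite_false] at p1 p2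
          exact hdisj _ p2 p1

end PingPong
/-- two loxodromics with orbit lines at infinite Hausdorff distance yield a
free sub-semigroup of rank 2. -/
theorem stmt_8 {G : Type*} [Group G] {X : Type*} [MetricSpace X]
    (δ : ℝ) (hδ : 0 ≤ δ) (hgeo : GeodesicSpace X) (hrips : RipsHyperbolic X δ)
    (act : G → X → X) (hact : IsIsomAction G X act) (x : X) (g h : G)
    (hg : LoxodromicWith (fun a b : X => dist a b) act g)
    (hh : LoxodromicWith (fun a b : X => dist a b) act h)
    (hfar : ¬ FinHausdorffClose (fun a b : X => dist a b)
      (Set.range fun n : ℤ => act (g ^ n) x) (Set.range fun n : ℤ => act (h ^ n) x)) :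
    ∃ a b : G, GenerateFreeSubsemigroup a b := by
  obtain ⟨Ag, Bg, hAg, hBg, hQg⟩ := lox_to_QIat hact hg x
  obtain ⟨Ah, Bh, hAh, hBh, hQh⟩ := lox_to_QIat hact hh x
  have hAg0 : (0:ℝ) < Ag := lt_of_lt_of_le zero_lt_one hAg
  have hAh0 : (0:ℝ) < Ah := lt_of_lt_of_le zero_lt_one hAh
  obtain ⟨Dg, hDg0, hDg⟩ := gp_orbit hδ hgeo hrips hQg hAg hBg
  obtain ⟨Dh, hDh0, hDh⟩ := gp_orbit hδ hgeo hrips hQh hAh hBh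
  obtain ⟨s, t, hst, hstn, hsnt⟩ := select_signs hact hQg hAg hBg hQh hAh hBh hfar
  obtain ⟨K1, hK10, hK1⟩ := cross_bound hδ hgeo hrips hact hQg hAg hBg hQh hAh hBh s t hst
  obtain ⟨K2, hK20, hK2⟩ := cross_bound hδ hgeo hrips hact hQg hAg hBg hQh hAh hBh s (!t) hstn
  obtain ⟨K3, hK30, hK3⟩ := cross_bound hδ hgeo hrips hact hQg hAg hBg hQh hAh hBh (!s) t hsnt
  set K : ℝ := max (max Dg Dh) (max K1 (max K2 K3)) with hKdef
  have hK0 : (0:ℝ) ≤ K := le_trans hDg0 (le_trans (le_max_left _ _) (le_max_left _ _))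
  have hKDg : Dg ≤ K := le_trans (le_max_left _ _) (le_max_left _ _)
  have hKDh : Dh ≤ K := le_trans (le_max_right _ _) (le_max_left _ _)
  have hKK1 : K1 ≤ K := le_trans (le_max_left _ _) (le_max_right _ _)
  have hKK2 : K2 ≤ K := le_trans (le_trans (le_max_left _ _) (le_max_right _ _))
    (le_max_right _ _)
  have hKK3 : K3 ≤ K := le_trans (le_trans (le_max_right _ _) (le_max_right _ _))
    (le_max_right _ _)
  have hσg : |((sgn s : ℤ):ℝ)| = 1 := by
    rcases sgn_cases s with h' | h' <;> rw [h'] <;> norm_num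
  have hσh : |((sgn t : ℤ):ℝ)| = 1 := by
    rcases sgn_cases t with h' | h' <;> rw [h'] <;> norm_num
  -- exponents
  set N : ℕ := ⌈Ag*(2*K+6*δ+1+Bg)⌉₊ with hNdef
  set M : ℕ := ⌈Ah*(2*K+6*δ+1+Bh)⌉₊ with hMdef
  refine ⟨g ^ (sgn s * (N:ℤ)), h ^ (sgn t * (M:ℤ)), ?_⟩
  -- displacement bounds
  have hdisp : ∀ (g' : G) (σ : ℤ) (A' B' : ℝ) (n' : ℕ), QIat act g' x A' B' → 1 ≤ A' →
      0 ≤ B' → |((σ:ℤ):ℝ)| = 1 → A'*(2*K+6*δ+1+B') ≤ (n' : ℝ) →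
      2*K+6*δ+1 ≤ dist x (act (g' ^ (σ * (n':ℤ))) x) := by
    intro g' σ A' B' n' hQ hA' hB' hσ hn'
    have hA'0 : (0:ℝ) < A' := lt_of_lt_of_le zero_lt_one hA'
    have hlow := (hQ (σ * (n':ℤ)) 0).1
    have e : ((σ * (n':ℤ) : ℤ):ℝ) - ((0:ℤ):ℝ) = ((σ:ℤ):ℝ) * (n':ℝ) := by push_cast; ring
    rw [e, abs_mul, hσ, one_mul, abs_of_nonneg (Nat.cast_nonneg _)] at hlow
    rw [act_one_zpow hact] at hlow
    rw [dist_comm] at hlow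
    nlinarith
  have hda : 2*K+6*δ+1 ≤ dist x (act (g ^ (sgn s * (N:ℤ))) x) :=
    hdisp g (sgn s) Ag Bg N hQg hAg hBg hσg (by rw [hNdef]; exact Nat.le_ceil _)
  have hdb : 2*K+6*δ+1 ≤ dist x (act (h ^ (sgn t * (M:ℤ))) x) :=
    hdisp h (sgn t) Ah Bh M hQh hAh hBh hσh (by rw [hMdef]; exact Nat.le_ceil _)
  -- self Gromov product bounds
  have hself : ∀ (g' : G) (σ : ℤ) (D' : ℝ) (n' : ℕ), (σ = 1 ∨ σ = -1) →
      (∀ a b k : ℤ, a ≤ k → k ≤ b →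
        gromovProd dist (act (g'^k) x) (act (g'^a) x) (act (g'^b) x) ≤ D') →
      gromovProd dist x (act (g' ^ (σ * (n':ℤ))) x) (act (g' ^ (-(σ * (n':ℤ)))) x) ≤ D' := by
    intro g' σ D' n' hσ hD'
    have h0 := hD' (-(n':ℤ)) (n':ℤ) 0 (by omega) (by omega)
    rw [act_one_zpow hact] at h0
    rcases hσ with rfl | rfl
    · simp only [one_mul]
      rw [gp_comm]
      exact h0
    · simp only [neg_mul, one_mul, neg_neg]
      exact h0
  have h_aa := hself g (sgn s) Dg N (sgn_cases s) hDg
  have h_bb := hself h (sgn t) Dh M (sgn_cases t) hDh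
  rw [zpow_neg] at h_aa h_bb
  -- cross bounds
  have h_pp := hK1 N M
  have h_ab := hK2 N M
  have h_ba := hK3 N M
  have est : sgn (!t) * (M:ℤ) = -(sgn t * (M:ℤ)) := by rw [sgn_not]; ring
  have ess : sgn (!s) * (N:ℤ) = -(sgn s * (N:ℤ)) := by rw [sgn_not]; ring
  rw [est, zpow_neg] at h_ab
  rw [ess, zpow_neg] at h_ba
  rw [gp_comm] at h_ba
  exact pingpong hδ hgeo hrips hact x _ _ K hK0
    (le_trans h_aa hKDg) (le_trans h_bb hKDh) (le_trans h_ab hKK2)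
    (le_trans h_ba hKK3)
    (le_trans h_pp hKK1) hda hdb
end
end

section
/- Let G be a group acting by isometries on a metric space X, and let c ∈ G be an element that is conjugate in G to its square c². Then c is not loxodromic for this action: for every x ∈ X, the map ℤ → X, n ↦ c^n·x, is not a quasi-isometric embedding. -/
noncomputable section

open Metric

universe uX uG

/-- an element conjugate to its square is never loxodromic. -/
theorem stmt_9 {G : Type*} [Group G] {X : Type*} [MetricSpace X]
    (act : G → X → X) (hact : IsIsomAction G X act)
    (c : G) (hconj : IsConj c (c ^ 2)) :
    ∀ x : X, ¬ IsQIEmbWith zdist (fun a b : X => dist a b) (fun n : ℤ => act (c ^ n) x) := by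
  intro x hQI
  obtain ⟨A, B, hA, hB, hq⟩ := hQI
  obtain ⟨s, hscs⟩ := isConj_iff.mp hconj
  -- conjugation by s^k doubles the exponent k times
  have hconjk : ∀ k : ℕ, s ^ k * c * (s ^ k)⁻¹ = c ^ (2 ^ k) := by
    intro k
    induction k with
    | zero => simp
    | succ k ih =>
      have h1 : s ^ (k + 1) * c * (s ^ (k + 1))⁻¹
          = s * (s ^ k * c * (s ^ k)⁻¹) * s⁻¹ := by group
      rw [h1, ih, ← conj_pow, hscs, ← pow_mul, ← pow_succ']
  have hconjkn : ∀ k n : ℕ, s ^ k * c ^ n * (s ^ k)⁻¹ = c ^ (2 ^ k * n) := by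
    intro k n
    rw [← conj_pow, hconjk, ← pow_mul]
  -- distance identity
  have hx0 : act (c ^ (0 : ℤ)) x = x := by
    rw [zpow_zero]; exact hact.act_one x
  have hdist : ∀ k n : ℕ,
      dist x (act (c ^ ((2 ^ k * n : ℕ) : ℤ)) x)
        = dist (act (s ^ k)⁻¹ x) (act (c ^ (n : ℕ)) (act (s ^ k)⁻¹ x)) := by
    intro k n
    have h1 : act (c ^ ((2 ^ k * n : ℕ) : ℤ)) x = act (c ^ (2 ^ k * n : ℕ)) x := by
      rw [zpow_natCast]
    rw [h1, ← hconjkn k n]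
    have h2 : dist x (act (s ^ k * c ^ n * (s ^ k)⁻¹) x)
        = dist (act (s ^ k)⁻¹ x) (act (s ^ k)⁻¹ (act (s ^ k * c ^ n * (s ^ k)⁻¹) x)) :=
      (hact.isometry (s ^ k)⁻¹ _ _).symm
    rw [h2]
    congr 1
    rw [← hact.act_mul, ← hact.act_mul]
    congr 1
    group
  -- bounds from QI embedding
  have hub : ∀ n : ℕ, dist x (act (c ^ (n : ℤ)) x) ≤ A * n + B := by
    intro n
    have := (hq 0 (n : ℤ)).2
    simp only [hx0] at this
    have hz : zdist 0 (n : ℤ) = (n : ℝ) := by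
      simp [zdist, abs_of_nonpos, Int.cast_natCast]
    rw [hz] at this
    exact this
  have hlb : ∀ n : ℕ, (n : ℝ) / A - B ≤ dist x (act (c ^ (n : ℤ)) x) := by
    intro n
    have := (hq 0 (n : ℤ)).1
    simp only [hx0] at this
    have hz : zdist 0 (n : ℤ) = (n : ℝ) := by
      simp [zdist, abs_of_nonpos, Int.cast_natCast]
    rw [hz] at this
    exact this
  -- main inequality
  have hmain : ∀ k n : ℕ, ((2 ^ k * n : ℕ) : ℝ) / A - B
      ≤ 2 * dist x (act (s ^ k)⁻¹ x) + (A * n + B) := by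
    intro k n
    refine le_trans (hlb (2 ^ k * n)) ?_
    rw [hdist k n]
    set y := act (s ^ k)⁻¹ x with hy
    have htri : dist y (act (c ^ (n : ℕ)) y)
        ≤ dist y x + dist x (act (c ^ (n : ℕ)) x) + dist (act (c ^ (n : ℕ)) x) (act (c ^ (n : ℕ)) y) :=
      dist_triangle4 _ _ _ _
    have hiso : dist (act (c ^ (n : ℕ)) x) (act (c ^ (n : ℕ)) y) = dist x y :=
      hact.isometry _ _ _
    have hn : act (c ^ (n : ℕ)) x = act (c ^ (n : ℤ)) x := by rw [zpow_natCast]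
    have hub' := hub n
    rw [← hn] at hub'
    calc dist y (act (c ^ (n : ℕ)) y)
        ≤ dist y x + dist x (act (c ^ (n : ℕ)) x) + dist x y := by
          rw [← hiso]; exact htri
      _ ≤ dist y x + (A * n + B) + dist x y := by linarith
      _ = 2 * dist x y + (A * n + B) := by rw [dist_comm y x]; ring
  -- choose k with 2^k > A^2
  obtain ⟨k, hk⟩ := pow_unbounded_of_one_lt (A ^ 2) (by norm_num : (1:ℝ) < 2)
  set D := dist x (act (s ^ k)⁻¹ x) with hD
  have hApos : (0 : ℝ) < A := lt_of_lt_of_le one_pos hA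
  have hgap : 0 < (2 : ℝ) ^ k / A - A := by
    rw [sub_pos, lt_div_iff₀ hApos]
    calc A * A = A ^ 2 := by ring
      _ < 2 ^ k := hk
  obtain ⟨n, hn⟩ := exists_nat_gt ((2 * B + 2 * D) / ((2 : ℝ) ^ k / A - A))
  have h1 := hmain k n
  have hcast : ((2 ^ k * n : ℕ) : ℝ) = (2 : ℝ) ^ k * n := by push_cast; ring
  rw [hcast] at h1
  have h2 : ((2 : ℝ) ^ k / A - A) * n ≤ 2 * B + 2 * D := by
    have : (2 : ℝ) ^ k * n / A = ((2:ℝ) ^ k / A) * n := by ring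
    rw [this] at h1
    linarith
  have h3 : (2 * B + 2 * D) / ((2 : ℝ) ^ k / A - A) < n := hn
  rw [div_lt_iff₀ hgap] at h3
  linarith [mul_comm ((2 : ℝ) ^ k / A - A) (n : ℝ)]
end
end
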